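/- arXiv:2307.09648 — 9 statements merged into one kernel-verified Lean document; each statement's English description precedes it below -/
import Mathlib

section
/- Let m and k be integers with 1 ≤ k ≤ m, and let H be a k-uniform hypergraph on a vertex set V of size m that is non-empty and non-complete. Then the number of automorphisms of H is at most m! / (m - k + 1). -/
open Pointwise

/-- There exist an edge and a non-edge differing in exactly one vertex. -/
lemma exists_adjacent_pair {V : Type*} [Fintype V] [DecidableEq V] (k : ℕ)
    (E : Finset (Finset V)) (huniform : ∀ e ∈ E, e.card = k)
    (hne : E.Nonempty) (hnc : ∃ s : Finset V, s.card = k ∧ s ∉ E) :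
    ∃ e ∈ E, ∃ f : Finset V, f.card = k ∧ f ∉ E ∧ (e \ f).card = 1 := by
  classical
  have hex : ∃ d, ∃ e ∈ E, ∃ f : Finset V, f.card = k ∧ f ∉ E ∧ (e \ f).card = d := by
    obtain ⟨e, he⟩ := hne
    obtain ⟨f, hfk, hfE⟩ := hnc
    exact ⟨(e \ f).card, e, he, f, hfk, hfE, rfl⟩
  obtain ⟨e, he, f, hfk, hfE, hcard⟩ := Nat.find_spec hex
  have hek : e.card = k := huniform e he
  have hd1 : 1 ≤ Nat.find hex := by
    rcases Nat.eq_zero_or_pos (Nat.find hex) with h0 | h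
    · exfalso
      rw [h0, Finset.card_eq_zero, Finset.sdiff_eq_empty_iff_subset] at hcard
      have : e = f := Finset.eq_of_subset_of_card_le hcard (by rw [hek, hfk])
      exact hfE (this ▸ he)
    · exact h
  have hd2 : Nat.find hex < 2 := by
    by_contra h
    push_neg at h
    have hxe : (e \ f).Nonempty := by
      rw [← Finset.card_pos, hcard]; omega
    obtain ⟨x, hx⟩ := hxe
    have hfecard : (f \ e).card = (e \ f).card := Finset.card_sdiff_comm (by rw [hfk, hek])
    have hye : (f \ e).Nonempty := by
      rw [← Finset.card_pos, hfecard, hcard]; omega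
    obtain ⟨y, hy⟩ := hye
    have hxe' := Finset.mem_sdiff.mp hx
    have hye' := Finset.mem_sdiff.mp hy
    set f' := insert x (f.erase y) with hf'
    have hxf' : x ∉ f.erase y := fun h => hxe'.2 (Finset.mem_of_mem_erase h)
    have hf'k : f'.card = k := by
      rw [hf', Finset.card_insert_of_notMem hxf', Finset.card_erase_of_mem hye'.1, hfk]
      have : 1 ≤ k := by
        rw [← hfk]; exact Finset.card_pos.mpr ⟨y, hye'.1⟩
      omega
    have hediff : e \ f' = (e \ f).erase x := by
      ext v
      simp only [hf', Finset.mem_sdiff, Finset.mem_insert, Finset.mem_erase, not_or]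
      constructor
      · rintro ⟨hv, hvx, hvf⟩
        exact ⟨hvx, hv, fun hvf2 => hvf ⟨fun hvy => hye'.2 (hvy ▸ hv), hvf2⟩⟩
      · rintro ⟨hvx, hv, hvf⟩
        exact ⟨hv, hvx, fun hh => hvf hh.2⟩
    have hf'f : (f' \ f).card = 1 := by
      have hset : f' \ f = {x} := by
        ext v
        simp only [hf', Finset.mem_sdiff, Finset.mem_insert, Finset.mem_erase,
          Finset.mem_singleton]
        constructor
        · rintro ⟨hv | hv, hvf⟩
          · exact hv
          · exact absurd hv.2 hvf
        · rintro rfl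
          exact ⟨Or.inl rfl, hxe'.2⟩
      rw [hset, Finset.card_singleton]
    by_cases hf'E : f' ∈ E
    · exact Nat.find_min hex (show 1 < Nat.find hex by omega)
        ⟨f', hf'E, f, hfk, hfE, hf'f⟩
    · refine Nat.find_min hex (show Nat.find hex - 1 < Nat.find hex by omega)
        ⟨e, he, f', hf'k, hf'E, ?_⟩
      rw [hediff, Finset.card_erase_of_mem hx, hcard]
  have hfind : Nat.find hex = 1 := by omega
  exact ⟨e, he, f, hfk, hfE, by rw [hcard, hfind]⟩

/-- For a non-empty, non-complete `k`-uniform hypergraph `(V, E)` on `m` vertices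
(`1 ≤ k ≤ m`), the number of automorphisms of `H` is at most `m! / (m - k + 1)`. -/
theorem automorphism_bound {V : Type*} [Fintype V] [DecidableEq V] (m k : ℕ)
    (hV : Fintype.card V = m) (hk1 : 1 ≤ k) (hkm : k ≤ m)
    (E : Finset (Finset V)) (huniform : ∀ e ∈ E, e.card = k)
    (hnonempty : E.Nonempty)
    (hnoncomplete : ∃ s : Finset V, s.card = k ∧ s ∉ E) :
    (Nat.card {σ : Equiv.Perm V // E.image (fun e => e.image (⇑σ)) = E} : ℝ) ≤
      (Nat.factorial m : ℝ) / ((m : ℝ) - (k : ℝ) + 1) := by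
  classical
  obtain ⟨e, he, f, hfk, hfE, hef1⟩ :=
    exists_adjacent_pair k E huniform hnonempty hnoncomplete
  have hek : e.card = k := huniform e he
  obtain ⟨x, hx⟩ := Finset.card_eq_one.mp hef1
  have hfe1 : (f \ e).card = 1 := by
    rw [Finset.card_sdiff_comm (by rw [hfk, hek]), hef1]
  obtain ⟨y, hy⟩ := Finset.card_eq_one.mp hfe1
  set A := e ∩ f with hA
  have hxmem : x ∈ e \ f := by rw [hx]; exact Finset.mem_singleton_self x
  have hymem : y ∈ f \ e := by rw [hy]; exact Finset.mem_singleton_self y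
  have hxe := (Finset.mem_sdiff.mp hxmem).1
  have hxf := (Finset.mem_sdiff.mp hxmem).2
  have hyf := (Finset.mem_sdiff.mp hymem).1
  have hyne := (Finset.mem_sdiff.mp hymem).2
  have hxA : x ∉ A := fun h => hxf (Finset.mem_inter.mp h).2
  have hyA : y ∉ A := fun h => hyne (Finset.mem_inter.mp h).1
  have heA : e = insert x A := by
    have h := Finset.sdiff_union_inter e f
    rw [hx] at h
    rw [Finset.insert_eq]
    exact h.symm
  have hfA : f = insert y A := by
    have h := Finset.sdiff_union_inter f e
    rw [hy, Finset.inter_comm] at h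
    rw [Finset.insert_eq]
    exact h.symm
  have hAcard : A.card + 1 = k := by
    rw [← hek, heA, Finset.card_insert_of_notMem hxA]
  -- The stabilizer
  set st := MulAction.stabilizer (Equiv.Perm V) E with hst
  have hcard_eq :
      Nat.card {σ : Equiv.Perm V // E.image (fun e => e.image (⇑σ)) = E} = Nat.card st := by
    apply Nat.card_congr
    apply Equiv.subtypeEquivRight
    intro σ
    simp [hst, MulAction.mem_stabilizer_iff, Finset.smul_finset_def, Equiv.Perm.smul_def]
  -- key fact: stabilizing permutations fixing A pointwise preserve edge-status of insert v A
  have key : ∀ σ : Equiv.Perm V, σ • E = E → (∀ a ∈ A, σ a = a) →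
      ∀ u w : V, σ u = w → insert u A ∈ E → insert w A ∉ E → False := by
    intro σ hσ hfix u w huw huE hwE
    have hAimg : A.image (fun v : V => σ • v) = A := by
      ext v
      simp only [Finset.mem_image, Equiv.Perm.smul_def]
      constructor
      · rintro ⟨a, ha, rfl⟩; rwa [hfix a ha]
      · intro hv; exact ⟨v, hv, hfix v hv⟩
    have himg : σ • (insert u A) = insert w A := by
      have hsu : σ • u = w := by rw [Equiv.Perm.smul_def, huw]
      rw [Finset.smul_finset_def, Finset.image_insert, hAimg, hsu]
    have hmem : insert u A ∈ E ↔ insert w A ∈ E := by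
      conv_rhs => rw [← himg, ← hσ]
      exact (Finset.smul_mem_smul_finset_iff σ).symm
    exact hwE (hmem.mp huE)
  -- the sets S, T
  set U := (Finset.univ : Finset V) \ A with hU
  set S := U.filter (fun v => insert v A ∈ E) with hS
  set T := U.filter (fun v => insert v A ∉ E) with hT
  have hSTcard : S.card + T.card = m - k + 1 := by
    have h1 : S.card + T.card = U.card :=
      Finset.card_filter_add_card_filter_not _
    have h2 : U.card = m - A.card := by
      rw [hU, Finset.card_sdiff_of_subset (Finset.subset_univ A), Finset.card_univ, hV]
    rw [h1, h2]; omega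
  have hSmem : ∀ s ∈ S, s ∉ A ∧ insert s A ∈ E := by
    intro s hs
    have h := Finset.mem_filter.mp hs
    exact ⟨(Finset.mem_sdiff.mp h.1).2, h.2⟩
  have hTmem : ∀ t ∈ T, t ∉ A ∧ insert t A ∉ E := by
    intro t ht
    have h := Finset.mem_filter.mp ht
    exact ⟨(Finset.mem_sdiff.mp h.1).2, h.2⟩
  have hSTne : ∀ s ∈ S, ∀ t ∈ T, s ≠ t := by
    intro s hs t ht h
    exact (hTmem t ht).2 (h ▸ (hSmem s hs).2)
  have hxS : x ∈ S := by
    rw [hS, Finset.mem_filter]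
    exact ⟨Finset.mem_sdiff.mpr ⟨Finset.mem_univ x, hxA⟩, heA ▸ he⟩
  have hyT : y ∈ T := by
    rw [hT, Finset.mem_filter]
    exact ⟨Finset.mem_sdiff.mpr ⟨Finset.mem_univ y, hyA⟩, hfA ▸ hfE⟩
  -- swap fixes A pointwise
  have hswapfix : ∀ u w : V, u ∉ A → w ∉ A → ∀ a ∈ A, Equiv.swap u w a = a := by
    intro u w hu hw a ha
    exact Equiv.swap_apply_of_ne_of_ne (fun h => hu (h ▸ ha)) (fun h => hw (h ▸ ha))
  -- E is not in the image
  have hEnot : E ∉ (S ×ˢ T).image (fun p : V × V => Equiv.swap p.1 p.2 • E) := by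
    intro hmem
    obtain ⟨⟨s, t⟩, hp, heq⟩ := Finset.mem_image.mp hmem
    obtain ⟨hsS, htT⟩ := Finset.mem_product.mp hp
    exact key (Equiv.swap s t) heq
      (hswapfix s t (hSmem s hsS).1 (hTmem t htT).1) s t
      (Equiv.swap_apply_left s t) (hSmem s hsS).2 (hTmem t htT).2
  -- injectivity
  have hinj : Set.InjOn (fun p : V × V => Equiv.swap p.1 p.2 • E) ↑(S ×ˢ T) := by
    rintro ⟨s, t⟩ hst ⟨s', t'⟩ hst' heq
    rw [Finset.mem_coe, Finset.mem_product] at hst hst'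
    obtain ⟨hsS, htT⟩ := hst
    obtain ⟨hsS', htT'⟩ := hst'
    simp only at heq
    have hσE : (Equiv.swap s' t' * Equiv.swap s t) • E = E := by
      rw [mul_smul, heq, ← mul_smul, Equiv.swap_mul_self, one_smul]
    have hfixA : ∀ a ∈ A, (Equiv.swap s' t' * Equiv.swap s t) a = a := by
      intro a ha
      rw [Equiv.Perm.mul_apply,
        hswapfix s t (hSmem s hsS).1 (hTmem t htT).1 a ha,
        hswapfix s' t' (hSmem s' hsS').1 (hTmem t' htT').1 a ha]
    by_cases htt : t = t'
    · by_cases hss : s = s'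
      · rw [hss, htt]
      · exfalso
        apply key _ hσE hfixA s' t ?_ (hSmem s' hsS').2 (hTmem t htT).2
        rw [Equiv.Perm.mul_apply,
          Equiv.swap_apply_of_ne_of_ne (Ne.symm hss) (hSTne s' hsS' t htT),
          Equiv.swap_apply_left]
        exact htt.symm
    · exfalso
      apply key _ hσE hfixA s t ?_ (hSmem s hsS).2 (hTmem t htT).2
      rw [Equiv.Perm.mul_apply, Equiv.swap_apply_left,
        Equiv.swap_apply_of_ne_of_ne (Ne.symm (hSTne s' hsS' t htT)) htt]
  -- the finset of orbit elements
  set F : Finset (Finset (Finset V)) :=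
    insert E ((S ×ˢ T).image (fun p : V × V => Equiv.swap p.1 p.2 • E)) with hF
  have hFcard : F.card = S.card * T.card + 1 := by
    rw [hF, Finset.card_insert_of_notMem hEnot, Finset.card_image_of_injOn hinj,
      Finset.card_product]
  have hFsub : ↑F ⊆ MulAction.orbit (Equiv.Perm V) E := by
    intro z hz
    rw [Finset.coe_insert, Set.mem_insert_iff] at hz
    rcases hz with h | hz
    · rw [h]; exact MulAction.mem_orbit_self E
    · rw [Finset.mem_coe, Finset.mem_image] at hz
      obtain ⟨p, _, rfl⟩ := hz
      exact MulAction.mem_orbit E _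
  have horbcard : m - k + 1 ≤ (MulAction.orbit (Equiv.Perm V) E).ncard := by
    have h1 : F.card ≤ (MulAction.orbit (Equiv.Perm V) E).ncard := by
      rw [← Set.ncard_coe_finset]
      exact Set.ncard_le_ncard hFsub (Set.toFinite _)
    have hS1 : 1 ≤ S.card := Finset.card_pos.mpr ⟨x, hxS⟩
    have hT1 : 1 ≤ T.card := Finset.card_pos.mpr ⟨y, hyT⟩
    have h2 : S.card + T.card ≤ S.card * T.card + 1 := by nlinarith
    omega
  -- orbit-stabilizer
  have horbit : st.index = (MulAction.orbit (Equiv.Perm V) E).ncard :=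
    MulAction.index_stabilizer _ _
  have hprod : Nat.card st * st.index = Nat.card (Equiv.Perm V) := Subgroup.card_mul_index st
  have hperm : Nat.card (Equiv.Perm V) = m.factorial := by
    rw [Nat.card_eq_fintype_card, Fintype.card_perm, hV]
  have hkey : Nat.card st * (m - k + 1) ≤ m.factorial := by
    calc Nat.card st * (m - k + 1) ≤ Nat.card st * st.index := by
          apply Nat.mul_le_mul_left
          rw [horbit]; exact horbcard
      _ = m.factorial := by rw [hprod, hperm]
  rw [hcard_eq]
  have hpos : (0 : ℝ) < (m : ℝ) - k + 1 := by
    have : (k : ℝ) ≤ m := by exact_mod_cast hkm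
    linarith
  rw [le_div_iff₀ hpos]
  calc (Nat.card st : ℝ) * ((m : ℝ) - k + 1)
      = ((Nat.card st * (m - k + 1) : ℕ) : ℝ) := by
        push_cast [Nat.cast_sub hkm]; ring
    _ ≤ (m.factorial : ℝ) := by exact_mod_cast hkey
end

section
/- Let H₁ and H₂ be two isomorphic k-uniform hypergraphs on the same vertex set V of size m (with 1 ≤ k ≤ m), both non-empty and non-complete. Then the number of permutations π of V with π(H₂) = H₁, i.e., {π(e) : e ∈ E₂} = E₁, is at most m! / (m - k + 1). -/
/-!
The isomorphisms `H₂ → H₁` form a coset of `Aut H₂`, so it suffices to bound `|Aut H|`.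
Moving an edge towards a non-edge one vertex at a time yields a set `t` and vertices `x, y ∉ t`
with `t ∪ {x}` an edge and `t ∪ {y}` not. An automorphism stabilising `t` preserves the partition
of `tᶜ` into `A = {z | t ∪ {z} ∈ E}` and `B = tᶜ \ A`, so `|Aut ∩ Stab t| ≤ |t|! |A|! |B|!`,
while `|Stab t| = |t|! (|A| + |B|)!`. Since `|Aut| |Stab t| ≤ |Aut ∩ Stab t| m!` and `A`, `B` are
non-empty, `|Aut| ≤ m! |A|! |B|! / (|A| + |B|)! ≤ m! / (|A| + |B|) = m! / (m - k + 1)`.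
-/

open Equiv Finset MulAction
open scoped Pointwise Nat

theorem Subgroup.card_mul_card_le_card_inf_mul_card {G : Type*} [Group G] [Finite G]
    (H K : Subgroup G) : Nat.card H * Nat.card K ≤ Nat.card ↥(H ⊓ K) * Nat.card G := by
  have hH : Nat.card ↥(H ⊓ K) * K.relIndex H = Nat.card H := by
    rw [← relIndex_bot_left H, ← relIndex_mul_relIndex ⊥ (H ⊓ K) H bot_le inf_le_left,
      inf_relIndex_left, relIndex_bot_left]
  have hK : K.relIndex H ≤ K.index := by
    rw [← relIndex_top_right]
    exact relIndex_le_of_le_right le_top (by rw [relIndex_top_right]; exact index_ne_zero_of_finite)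
  calc Nat.card H * Nat.card K = Nat.card ↥(H ⊓ K) * K.relIndex H * Nat.card K := by rw [hH]
    _ ≤ Nat.card ↥(H ⊓ K) * K.index * Nat.card K := by gcongr
    _ = Nat.card ↥(H ⊓ K) * Nat.card G := by rw [mul_assoc, mul_comm K.index, K.card_mul_index]

theorem MulAction.card_smul_eq_eq_card_stabilizer {G X : Type*} [Group G] [MulAction G X]
    {a b : X} (h : ∃ σ : G, σ • a = b) :
    Nat.card {g : G // g • a = b} = Nat.card (stabilizer G a) := by
  obtain ⟨σ, rfl⟩ := h
  exact Nat.card_congr <| subtypeEquiv (Equiv.mulLeft σ⁻¹) fun g => by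
    rw [mem_stabilizer_iff, coe_mulLeft, mul_smul, inv_smul_eq_iff]

theorem Nat.add_mul_factorial_mul_factorial_le {a b : ℕ} (ha : 0 < a) (hb : 0 < b) :
    (a + b) * (a ! * b !) ≤ (a + b)! := by
  obtain ⟨c, rfl⟩ : ∃ c, a = c + 1 := ⟨a - 1, by omega⟩
  have hchoose : c + 1 ≤ (c + b).choose c :=
    Nat.choose_succ_self_right c ▸ Nat.choose_le_choose c (by omega)
  calc (c + 1 + b) * ((c + 1)! * b !) = (c + 1 + b) * ((c + 1) * (c ! * b !)) := by
        rw [Nat.factorial_succ, mul_assoc]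
    _ ≤ (c + 1 + b) * ((c + b).choose c * (c ! * b !)) := by gcongr
    _ = (c + 1 + b)! := by
        rw [show c + 1 + b = (c + b) + 1 by omega, Nat.factorial_succ,
          ← Nat.add_choose_mul_factorial_mul_factorial, Nat.choose_symm_add, mul_assoc]

theorem Equiv.Perm.card_stabilizer_finset {α : Type*} [Fintype α] [DecidableEq α]
    (s : Finset α) : Nat.card (stabilizer (Perm α) s) = (#s)! * (Fintype.card α - #s)! := by
  have hmem (g : Perm α) :
      g ∈ stabilizer (Perm α) s ↔ (fun a => decide (a ∈ s)) ∘ g = fun a => decide (a ∈ s) := by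
    rw [mem_stabilizer_finset, funext_iff]
    simp [Perm.smul_def]
  rw [Nat.card_congr (subtypeEquivRight hmem), Nat.card_eq_fintype_card,
    DomMulAct.stabilizer_card, Fintype.prod_bool]
  simp

theorem Finset.exists_insert_mem_insert_notMem {α : Type*} [DecidableEq α]
    {E : Finset (Finset α)} {e s : Finset α} (he : e ∈ E) (hs : s ∉ E) (hcard : #e = #s) :
    ∃ t x y, x ∉ t ∧ y ∉ t ∧ insert x t ∈ E ∧ insert y t ∉ E := by
  induction hn : #(e \ s) using Nat.strong_induction_on generalizing e with
  | _ n ih =>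
  have hes : e ≠ s := fun h => hs (h ▸ he)
  obtain ⟨x, hx⟩ : (e \ s).Nonempty :=
    sdiff_nonempty.2 fun h => hes (eq_of_subset_of_card_le h hcard.ge)
  obtain ⟨y, hy⟩ : (s \ e).Nonempty :=
    sdiff_nonempty.2 fun h => hes (eq_of_subset_of_card_le h hcard.le).symm
  rw [mem_sdiff] at hx hy
  have hyx : y ∉ e.erase x := fun h => hy.2 (mem_of_mem_erase h)
  by_cases hyE : insert y (e.erase x) ∈ E
  · -- trading `x` for `y` brings the edge one step closer to `s`
    have hsub : insert y (e.erase x) \ s ⊂ e \ s := by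
      refine (ssubset_iff_of_subset fun z hz => ?_).2
        ⟨x, mem_sdiff.2 hx, by simp [hx.2, ne_of_mem_of_not_mem hx.1 hy.2]⟩
      simp only [mem_sdiff, mem_insert, mem_erase] at hz ⊢
      rcases hz with ⟨rfl | ⟨-, hz⟩, hzs⟩
      · exact absurd hy.1 hzs
      · exact ⟨hz, hzs⟩
    refine ih _ (hn ▸ card_lt_card hsub) hyE ?_ rfl
    rw [card_insert_of_notMem hyx, card_erase_of_mem hx.1, ← hcard,
      Nat.sub_add_cancel (card_pos.2 ⟨x, hx.1⟩)]
  · exact ⟨e.erase x, x, y, notMem_erase x e, hyx, by rwa [insert_erase hx.1], hyE⟩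

section LinkType

variable {α : Type*} [DecidableEq α]

def linkType (E : Finset (Finset α)) (t : Finset α) (a : α) : Option Bool :=
  if a ∈ t then none else some (insert a t ∈ E)

theorem linkType_comp_eq_of_mem_stabilizer {E : Finset (Finset α)} {t : Finset α} {g : Perm α}
    (hgE : g ∈ stabilizer (Perm α) E) (hgt : g ∈ stabilizer (Perm α) t) :
    linkType E t ∘ g = linkType E t := by
  funext a
  have hinsert : g • insert a t = insert (g a) t := by
    rw [smul_finset_insert, mem_stabilizer_iff.1 hgt, Perm.smul_def]
  have hE : insert (g a) t ∈ E ↔ insert a t ∈ E := hinsert ▸ mem_stabilizer_finset.1 hgE _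
  have ht : g a ∈ t ↔ a ∈ t := mem_stabilizer_finset.1 hgt a
  simp only [Function.comp_apply, linkType, ht, hE]

variable [Fintype α]

theorem card_perm_comp_linkType_eq (E : Finset (Finset α)) (t : Finset α) :
    Fintype.card {g : Perm α // linkType E t ∘ g = linkType E t} =
      (#t)! * ((#{a ∈ tᶜ | insert a t ∈ E})! * (#{a ∈ tᶜ | insert a t ∉ E})!) := by
  rw [DomMulAct.stabilizer_card, Fintype.prod_option, Fintype.prod_bool]
  simp only [Fintype.card_subtype]
  congr 4 <;> ext a <;> by_cases a ∈ t <;> simp [linkType, *]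

theorem card_stabilizer_mul_le_factorial {E : Finset (Finset α)} {t : Finset α} {x y : α}
    (hx : x ∉ t) (hy : y ∉ t) (hxE : insert x t ∈ E) (hyE : insert y t ∉ E) :
    Nat.card (stabilizer (Perm α) E) * (Fintype.card α - #t) ≤ (Fintype.card α)! := by
  set Aut := stabilizer (Perm α) E
  set n := Fintype.card α - #t
  set A := {a ∈ tᶜ | insert a t ∈ E}
  set B := {a ∈ tᶜ | insert a t ∉ E}
  have hAB : #A + #B = n := by rw [card_filter_add_card_filter_not, card_compl]
  have hA : 0 < #A := card_pos.2 ⟨x, by simpa [A, hx]⟩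
  have hB : 0 < #B := card_pos.2 ⟨y, by simpa [B, hy]⟩
  have hinf : Nat.card ↥(Aut ⊓ stabilizer (Perm α) t) ≤ (#t)! * ((#A)! * (#B)!) := by
    rw [← card_perm_comp_linkType_eq, ← Nat.card_eq_fintype_card]
    exact Nat.card_le_card_of_injective
      (fun g => ⟨g, linkType_comp_eq_of_mem_stabilizer g.2.1 g.2.2⟩)
      fun g h hgh => Subtype.ext (Subtype.mk.inj hgh)
  have hcard := Aut.card_mul_card_le_card_inf_mul_card (stabilizer (Perm α) t)
  rw [Perm.card_stabilizer_finset, Nat.card_perm, Nat.card_eq_fintype_card (α := α)] at hcard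
  refine Nat.le_of_mul_le_mul_right (c := (#t)! * ((#A)! * (#B)!)) ?_ (by positivity)
  calc Nat.card Aut * n * ((#t)! * ((#A)! * (#B)!))
      = Nat.card Aut * ((#t)! * ((#A + #B) * ((#A)! * (#B)!))) := by rw [hAB]; ring
    _ ≤ Nat.card Aut * ((#t)! * n !) := by
        gcongr; exact hAB ▸ Nat.add_mul_factorial_mul_factorial_le hA hB
    _ ≤ (#t)! * ((#A)! * (#B)!) * (Fintype.card α)! := hcard.trans (by gcongr)
    _ = (Fintype.card α)! * ((#t)! * ((#A)! * (#B)!)) := mul_comm _ _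

end LinkType

theorem isomorphism_count_bound_general {V : Type*} [Fintype V] [DecidableEq V] (m k : ℕ)
    (hV : Fintype.card V = m) (hkm : k ≤ m)
    (E₁ E₂ : Finset (Finset V))
    (huniform₂ : ∀ e ∈ E₂, e.card = k)
    (hnonempty₂ : E₂.Nonempty)
    (hnoncomplete₂ : ∃ s : Finset V, s.card = k ∧ s ∉ E₂)
    (hiso : ∃ σ : Equiv.Perm V, E₂.image (fun e => e.image (⇑σ)) = E₁) :
    (Nat.card {π : Equiv.Perm V // E₂.image (fun e => e.image (⇑π)) = E₁} : ℝ) ≤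
      (Nat.factorial m : ℝ) / ((m : ℝ) - (k : ℝ) + 1) := by
  obtain ⟨e, he⟩ := hnonempty₂
  obtain ⟨s, hs, hsE⟩ := hnoncomplete₂
  obtain ⟨t, x, y, hx, hy, hxE, hyE⟩ :=
    exists_insert_mem_insert_notMem he hsE (by rw [huniform₂ e he, hs])
  have ht : #t + 1 = k := card_insert_of_notMem hx ▸ huniform₂ _ hxE
  have hbound := hV ▸ card_stabilizer_mul_le_factorial hx hy hxE hyE
  have hcount : Nat.card {π : Perm V // π • E₂ = E₁} = Nat.card (stabilizer (Perm V) E₂) :=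
    card_smul_eq_eq_card_stabilizer hiso
  have hden : (m : ℝ) - k + 1 = ((m - #t : ℕ) : ℝ) := by
    rw [Nat.cast_sub (by omega), ← ht]; push_cast; ring
  change (Nat.card {π : Perm V // π • E₂ = E₁} : ℝ) ≤ _
  rw [hcount, hden, le_div_iff₀ (by norm_cast; omega)]
  exact_mod_cast hbound

/-- If `H₁ = (V, E₁)` and `H₂ = (V, E₂)` are isomorphic non-empty, non-complete
`k`-uniform hypergraphs on a common vertex set `V` of size `m` (`1 ≤ k ≤ m`), then the number of
permutations `π` of `V` with `{π(e) : e ∈ E₂} = E₁` is at most `m! / (m - k + 1)`. -/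
theorem isomorphism_count_bound {V : Type*} [Fintype V] [DecidableEq V] (m k : ℕ)
    (hV : Fintype.card V = m) (hk1 : 1 ≤ k) (hkm : k ≤ m)
    (E₁ E₂ : Finset (Finset V))
    (huniform₁ : ∀ e ∈ E₁, e.card = k) (huniform₂ : ∀ e ∈ E₂, e.card = k)
    (hnonempty₁ : E₁.Nonempty) (hnonempty₂ : E₂.Nonempty)
    (hnoncomplete₁ : ∃ s : Finset V, s.card = k ∧ s ∉ E₁)
    (hnoncomplete₂ : ∃ s : Finset V, s.card = k ∧ s ∉ E₂)
    (hiso : ∃ σ : Equiv.Perm V, E₂.image (fun e => e.image (⇑σ)) = E₁) :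
    (Nat.card {π : Equiv.Perm V // E₂.image (fun e => e.image (⇑π)) = E₁} : ℝ) ≤
      (Nat.factorial m : ℝ) / ((m : ℝ) - (k : ℝ) + 1) :=
  isomorphism_count_bound_general m k hV hkm E₁ E₂ huniform₂ hnonempty₂ hnoncomplete₂ hiso
end

section
/- Let m ≥ 2 be even, let M be a set of m items, and let v₁, v₂ : 2^M → ℝ be arbitrary set functions. Let π₁ and π₂ be independent uniformly random permutations of M. Then with probability at least 1 - 1/(m/2 + 1), there exists an envy-free allocation for the renamed valuations v₁^{π₁} and v₂^{π₂}; that is, there exists S ⊆ M with v₁(π₁⁻¹(S)) ≥ v₁(π₁⁻¹(M \ S)) and v₂(π₂⁻¹(M \ S)) ≥ v₂(π₂⁻¹(S)). -/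
/-!
Let `𝒜` be the bundles agent 1 weakly prefers to their complement and `ℬ` the bundles whose
complement agent 2 weakly prefers. An envy-free allocation for `(π₁, π₂)` is a set in
`π₁ • 𝒜 ∩ π₂ • ℬ`, so only `σ = π₁⁻¹ π₂` matters. Both families meet every complementary pair
`{s, sᶜ}`, hence `σ • ℬ` misses `𝒜` only if `σ • ℬ = 𝒜ᶜ`; in that case `𝒜ᶜ` contains exactly one
set of each complementary pair, and the failing `σ` form a coset of the stabiliser `H` of `𝒜ᶜ`.
No element of `H` maps a set to its complement. But a subgroup of `S_{2k}` of index at most `k`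
does contain such an element: for `k = 1` it is everything, and for `k ≥ 2` it contains the
alternating group (for `k ≥ 3` because its normal core has index dividing `k! < (2k)!`), which acts
transitively on `k`-sets. So `[S_{2k} : H] ≥ k + 1`, and `σ` fails with probability at most
`1 / (k + 1)`.
-/

open scoped Pointwise Nat
open Equiv MulAction

namespace Equiv.Perm

variable {α : Type*} [Fintype α] [DecidableEq α]

theorem alternatingGroup_le_of_index_lt_card (hα : 5 ≤ Nat.card α) {H : Subgroup (Perm α)}
    (hH : H.index < Nat.card α) : alternatingGroup α ≤ H := by
  have hcore : H.normalCore.index ∣ H.index ! := by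
    rw [Subgroup.normalCore_eq_ker, Subgroup.index_ker, Subgroup.index_eq_card, ← Nat.card_perm]
    exact Subgroup.card_subgroup_dvd_card _
  have hcore_ne_bot : H.normalCore ≠ ⊥ := by
    intro hbot
    rw [hbot, Subgroup.index_bot, Nat.card_perm] at hcore
    exact (Nat.le_of_dvd (Nat.factorial_pos _) hcore).not_gt
      ((Nat.factorial_lt (Nat.pos_of_ne_zero Subgroup.index_ne_zero_of_finite)).mpr hH)
  exact (alternatingGroup_le_of_normal hα
    ((Subgroup.nontrivial_iff_ne_bot _).mpr hcore_ne_bot)).trans H.normalCore_le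

theorem exists_mem_smul_finset_eq_compl {k : ℕ} (hα : Nat.card α = 2 * k)
    {H : Subgroup (Perm α)} (hH : H.index ≤ k) : ∃ g ∈ H, ∃ s : Finset α, g • s = sᶜ := by
  have hk : 1 ≤ k := (Nat.pos_of_ne_zero Subgroup.index_ne_zero_of_finite).trans_le hH
  obtain ⟨s, -, hs⟩ := Finset.exists_subset_card_eq (show k ≤ (Finset.univ : Finset α).card by
    rw [Finset.card_univ, ← Nat.card_eq_fintype_card]; omega)
  have hsc : sᶜ.card = k := by
    rw [Finset.card_compl, hs, ← Nat.card_eq_fintype_card, hα]; omega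
  let s' : Set.powersetCard α k := ⟨s, Set.powersetCard.mem_iff.mpr hs⟩
  let sc' : Set.powersetCard α k := ⟨sᶜ, Set.powersetCard.mem_iff.mpr hsc⟩
  obtain rfl | hk2 := eq_or_lt_of_le hk
  · have hH : H = ⊤ := Subgroup.index_eq_one.mp
      (le_antisymm hH (Nat.one_le_iff_ne_zero.mpr Subgroup.index_ne_zero_of_finite))
    obtain ⟨g, hg⟩ := Set.powersetCard.isPretransitive.exists_smul_eq s' sc'
    exact ⟨g, hH ▸ Subgroup.mem_top g, s, congrArg Subtype.val hg⟩
  · have hA : alternatingGroup α ≤ H := by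
      obtain rfl | hk3 := eq_or_lt_of_le (Nat.succ_le_of_lt hk2)
      · exact alternatingGroup_le_of_index_le_two hH
      · exact alternatingGroup_le_of_index_lt_card (by omega) (by omega)
    obtain ⟨⟨g, hg⟩, hgs⟩ :=
      (Set.powersetCard.isPretransitive_alternatingGroup (by omega)).exists_smul_eq s' sc'
    exact ⟨g, hA hg, s, congrArg Subtype.val hgs⟩

theorem le_index_stabilizer_of_compl_mem_iff {k : ℕ} (hα : Nat.card α = 2 * k)
    {𝒜 : Set (Finset α)} (h𝒜 : ∀ s, sᶜ ∈ 𝒜 ↔ s ∉ 𝒜) :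
    k + 1 ≤ (stabilizer (Perm α) 𝒜).index := by
  by_contra! h
  obtain ⟨g, hg, s, hgs⟩ := exists_mem_smul_finset_eq_compl hα (Nat.le_of_lt_succ h)
  have hs : g • s ∈ g • 𝒜 ↔ s ∈ 𝒜 := Set.smul_mem_smul_set_iff
  rw [mem_stabilizer_iff.mp hg, hgs] at hs
  exact iff_not_self (hs.symm.trans (h𝒜 s))

theorem image_symm_eq_inv_smul {β : Type*} [DecidableEq β] (σ : Perm β) (s : Finset β) :
    s.image σ.symm = σ⁻¹ • s :=
  rfl

end Equiv.Perm

theorem MulAction.card_smul_eq_le_card_stabilizer {G X : Type*} [Group G] [MulAction G X]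
    [Finite G] (x y : X) : Nat.card {g : G // g • x = y} ≤ Nat.card (stabilizer G y) := by
  rcases isEmpty_or_nonempty {g : G // g • x = y} with h | ⟨g₀, rfl⟩
  · simp
  refine Nat.card_le_card_of_injective (fun g ↦ ⟨g * g₀⁻¹, ?_⟩) fun g h hgh ↦ ?_
  · rw [mem_stabilizer_iff, mul_smul, inv_smul_smul, g.2]
  · exact Subtype.ext (mul_right_cancel (congrArg Subtype.val hgh))

theorem Finset.smul_finset_compl {G α : Type*} [Group G] [MulAction G α] [Fintype α]
    [DecidableEq α] (g : G) (s : Finset α) : g • sᶜ = (g • s)ᶜ :=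
  Finset.coe_injective (by push_cast; exact Set.smul_set_compl)

theorem eq_compl_of_disjoint_of_mem_or_compl_mem {β : Type*} [BooleanAlgebra β] {𝒜 ℬ : Set β}
    (h𝒜 : ∀ s, s ∈ 𝒜 ∨ sᶜ ∈ 𝒜) (hℬ : ∀ s, s ∈ ℬ ∨ sᶜ ∈ ℬ) (h : Disjoint 𝒜 ℬ) : ℬ = 𝒜ᶜ := by
  ext s
  refine ⟨fun hs hs' ↦ Set.disjoint_left.mp h hs' hs, fun hs ↦ ?_⟩
  have hsc : sᶜ ∈ 𝒜 := (h𝒜 s).resolve_left hs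
  simpa [Set.disjoint_left.mp h hsc] using hℬ s

section ComplPairs

variable {α : Type*} [Fintype α] [DecidableEq α] {𝒜 ℬ : Set (Finset α)}

theorem mem_or_compl_mem_smul_set {G : Type*} [Group G] [MulAction G α]
    (hℬ : ∀ s, s ∈ ℬ ∨ sᶜ ∈ ℬ) (g : G) (s : Finset α) : s ∈ g • ℬ ∨ sᶜ ∈ g • ℬ := by
  simpa only [Set.mem_smul_set_iff_inv_smul_mem, Finset.smul_finset_compl] using hℬ (g⁻¹ • s)

theorem card_disjoint_smul_le {k : ℕ} (hα : Nat.card α = 2 * k)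
    (h𝒜 : ∀ s, s ∈ 𝒜 ∨ sᶜ ∈ 𝒜) (hℬ : ∀ s, s ∈ ℬ ∨ sᶜ ∈ ℬ) :
    (k + 1) * Nat.card {σ : Perm α // Disjoint 𝒜 (σ • ℬ)} ≤ (Nat.card α)! := by
  rcases isEmpty_or_nonempty {σ : Perm α // Disjoint 𝒜 (σ • ℬ)} with h | ⟨σ₀, hσ₀⟩
  · simp
  have hdisj (σ : Perm α) : Disjoint 𝒜 (σ • ℬ) ↔ σ • ℬ = 𝒜ᶜ :=
    ⟨eq_compl_of_disjoint_of_mem_or_compl_mem h𝒜 (mem_or_compl_mem_smul_set hℬ σ),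
      fun h ↦ h ▸ disjoint_compl_right⟩
  have hcompl (s : Finset α) : sᶜ ∈ 𝒜ᶜ ↔ s ∉ 𝒜ᶜ := by
    have h₁ := h𝒜 s
    have h₂ := mem_or_compl_mem_smul_set hℬ σ₀ s
    rw [(hdisj σ₀).mp hσ₀] at h₂
    simp only [Set.mem_compl_iff] at h₂ ⊢
    tauto
  calc (k + 1) * Nat.card {σ : Perm α // Disjoint 𝒜 (σ • ℬ)}
      ≤ (stabilizer (Perm α) 𝒜ᶜ).index * Nat.card (stabilizer (Perm α) 𝒜ᶜ) :=
        Nat.mul_le_mul (Perm.le_index_stabilizer_of_compl_mem_iff hα hcompl)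
          ((Nat.card_congr (subtypeEquivRight hdisj)).trans_le
            (card_smul_eq_le_card_stabilizer ℬ 𝒜ᶜ))
    _ = (Nat.card α)! := by rw [mul_comm, Subgroup.card_mul_index, Nat.card_perm]

theorem card_disjoint_smul_smul_le {k : ℕ} (hα : Nat.card α = 2 * k)
    (h𝒜 : ∀ s, s ∈ 𝒜 ∨ sᶜ ∈ 𝒜) (hℬ : ∀ s, s ∈ ℬ ∨ sᶜ ∈ ℬ) :
    (k + 1) * Nat.card {p : Perm α × Perm α // Disjoint (p.1 • 𝒜) (p.2 • ℬ)} ≤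
      (Nat.card α)! ^ 2 := by
  have e : {p : Perm α × Perm α // Disjoint (p.1 • 𝒜) (p.2 • ℬ)} ≃
      {σ : Perm α // Disjoint 𝒜 (σ • ℬ)} × Perm α :=
    (((prodShear (Equiv.refl _) fun a ↦ Equiv.mulLeft a⁻¹).trans (prodComm _ _)).subtypeEquiv
      fun p ↦ by simp [Set.disjoint_smul_set_left, mul_smul]).trans
      prodSubtypeFstEquivSubtypeProd
  rw [Nat.card_congr e, Nat.card_prod, Nat.card_perm, ← mul_assoc, sq]
  exact Nat.mul_le_mul_right _ (card_disjoint_smul_le hα h𝒜 hℬ)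

theorem le_card_not_disjoint_smul_smul {k : ℕ} (hα : Nat.card α = 2 * k)
    (h𝒜 : ∀ s, s ∈ 𝒜 ∨ sᶜ ∈ 𝒜) (hℬ : ∀ s, s ∈ ℬ ∨ sᶜ ∈ ℬ) :
    k * (Nat.card α)! ^ 2 ≤
      (k + 1) * Nat.card {p : Perm α × Perm α // ¬Disjoint (p.1 • 𝒜) (p.2 • ℬ)} := by
  classical
  have hsum := Nat.card_congr (sumCompl fun p : Perm α × Perm α ↦ Disjoint (p.1 • 𝒜) (p.2 • ℬ))
  rw [Nat.card_sum, Nat.card_prod, Nat.card_perm, ← sq] at hsum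
  have hbad := card_disjoint_smul_smul_le hα h𝒜 hℬ
  nlinarith

end ComplPairs

theorem ef_exists_whp_general_general {M : Type*} [Fintype M] [DecidableEq M] (m : ℕ)
    (heven : Even m) (hM : Fintype.card M = m) (v₁ v₂ : Finset M → ℝ) :
    ((1 : ℝ) - 1 / ((m : ℝ) / 2 + 1)) * (Nat.factorial m : ℝ) ^ 2 ≤
      Nat.card {p : Equiv.Perm M × Equiv.Perm M //
        ∃ S : Finset M,
          v₁ (S.image (⇑p.1.symm)) ≥ v₁ (Sᶜ.image (⇑p.1.symm)) ∧
          v₂ (Sᶜ.image (⇑p.2.symm)) ≥ v₂ (S.image (⇑p.2.symm))} := by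
  obtain ⟨k, rfl⟩ := heven
  set 𝒜 : Set (Finset M) := {T | v₁ Tᶜ ≤ v₁ T}
  set ℬ : Set (Finset M) := {U | v₂ U ≤ v₂ Uᶜ}
  have hEF (p : Perm M × Perm M) : (∃ S : Finset M,
      v₁ (S.image (⇑p.1.symm)) ≥ v₁ (Sᶜ.image (⇑p.1.symm)) ∧
      v₂ (Sᶜ.image (⇑p.2.symm)) ≥ v₂ (S.image (⇑p.2.symm))) ↔
        ¬Disjoint (p.1 • 𝒜) (p.2 • ℬ) := by
    simp only [Perm.image_symm_eq_inv_smul, Finset.smul_finset_compl, Set.not_disjoint_iff,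
      Set.mem_smul_set_iff_inv_smul_mem, 𝒜, ℬ, Set.mem_ofPred_eq, ge_iff_le]
  have hcount := le_card_not_disjoint_smul_smul (𝒜 := 𝒜) (ℬ := ℬ) (k := k)
    (by rw [Nat.card_eq_fintype_card, hM]; ring)
    (fun T ↦ by simpa [𝒜] using le_total (v₁ Tᶜ) (v₁ T))
    (fun U ↦ by simpa [ℬ] using le_total (v₂ U) (v₂ Uᶜ))
  rw [Nat.card_eq_fintype_card, hM] at hcount
  rw [Nat.card_congr (subtypeEquivRight hEF)]
  have hk : ((k + k : ℕ) : ℝ) / 2 + 1 = k + 1 := by push_cast; ring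
  rw [hk, one_sub_div (by positivity), add_sub_cancel_right, div_mul_eq_mul_div,
    div_le_iff₀ (by positivity), mul_comm _ ((k : ℝ) + 1)]
  exact_mod_cast hcount

/-- For an even number `m ≥ 2` of items and two agents with arbitrary valuations
`v₁, v₂ : 2^M → ℝ`, after independent uniformly random renamings `π₁, π₂`, an envy-free
allocation exists with probability at least `1 - 1/(m/2 + 1)`.  Probability is expressed by
counting pairs of permutations: the number of pairs `(π₁, π₂)` for which an EF allocation exists
is at least `(1 - 1/(m/2 + 1)) · (m!)²`. -/
theorem ef_exists_whp_general {M : Type*} [Fintype M] [DecidableEq M] (m : ℕ)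
    (hm : 2 ≤ m) (heven : Even m) (hM : Fintype.card M = m) (v₁ v₂ : Finset M → ℝ) :
    ((1 : ℝ) - 1 / ((m : ℝ) / 2 + 1)) * (Nat.factorial m : ℝ) ^ 2 ≤
      Nat.card {p : Equiv.Perm M × Equiv.Perm M //
        ∃ S : Finset M,
          v₁ (S.image (⇑p.1.symm)) ≥ v₁ (Sᶜ.image (⇑p.1.symm)) ∧
          v₂ (Sᶜ.image (⇑p.2.symm)) ≥ v₂ (S.image (⇑p.2.symm))} :=
  ef_exists_whp_general_general m heven hM v₁ v₂
end

section
/- Let n ≥ 2 agents have strict linear orders π₁, ..., π_n on a set M of m ≥ 2n items. If two distinct agents i ≠ j have the same most-preferred item (the top item of π_i equals the top item of π_j), then no allocation of all of M among the n agents is SD-EFX with respect to (π₁, ..., π_n). -/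
/-- An order on items is encoded as a ranking bijection `π : M ≃ Fin m`, where smaller rank
means more preferred.  `sdDom π A B` says `A` sd-dominates `B` with respect to `π`. -/
def sdDom {M : Type*} [DecidableEq M] {m : ℕ} (π : M ≃ Fin m) (A B : Finset M) : Prop :=
  B.card ≤ A.card ∧ ∀ k < B.card,
    (Finset.sort (A.image fun a => ((π a : Fin m) : ℕ)) (· ≤ ·)).getD k 0 ≤
    (Finset.sort (B.image fun b => ((π b : Fin m) : ℕ)) (· ≤ ·)).getD k 0

/-- `A` is an allocation of the set `S` of items among `n` agents. -/
def IsAllocation {M : Type*} [DecidableEq M] {n : ℕ} (A : Fin n → Finset M) (S : Finset M) :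
    Prop :=
  (∀ i j : Fin n, i ≠ j → Disjoint (A i) (A j)) ∧ Finset.univ.biUnion A = S

/-- The allocation `A` is SD-envy-free up to any item with respect to the orders `π`. -/
def SDEFX {M : Type*} [DecidableEq M] {n m : ℕ} (π : Fin n → (M ≃ Fin m))
    (A : Fin n → Finset M) : Prop :=
  ∀ i j : Fin n, (A j).Nonempty → ∀ g ∈ A j, sdDom (π i) (A i) ((A j).erase g)

/-!
Let `g` be the common favourite and let `k` be the agent holding it; one of the two agents
sharing `g` as favourite, say `a`, differs from `k`. If `A k` contained a second item `h`, then
`A k \ {h}` would still contain `g`, and SD-EFX for `a` would force `A a` to contain an item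
ranked as high as `g` by `a`, i.e. `g` itself. So `A k = {g}`, and SD-EFX for `k` caps every
other bundle at two items, leaving room for at most `2n - 1 < m` items.
-/

open Finset

lemma sort_getD_zero_eq_min' (s : Finset ℕ) (hs : s.Nonempty) :
    (s.sort (· ≤ ·)).getD 0 0 = s.min' hs := by
  have hlen : 0 < (s.sort (· ≤ ·)).length := by
    rw [length_sort]; exact hs.card_pos
  rw [List.getD_eq_getElem _ _ hlen]
  exact sorted_zero_eq_min'

lemma sdDom.exists_rank_le_of_mem {M : Type*} [DecidableEq M] {m : ℕ} {π : M ≃ Fin m}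
    {A B : Finset M} (hAB : sdDom π A B) {b : M} (hb : b ∈ B) : ∃ a ∈ A, π a ≤ π b := by
  obtain ⟨hcard, hrank⟩ := hAB
  have hBne : (B.image fun x => ((π x : Fin m) : ℕ)).Nonempty := ⟨_, mem_image_of_mem _ hb⟩
  have hAne : (A.image fun x => ((π x : Fin m) : ℕ)).Nonempty :=
    (card_pos.mp ((card_pos.mpr ⟨b, hb⟩).trans_le hcard)).image _
  have hbest := hrank 0 (card_pos.mpr ⟨b, hb⟩)
  rw [sort_getD_zero_eq_min' _ hAne, sort_getD_zero_eq_min' _ hBne] at hbest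
  obtain ⟨a, ha, hamin⟩ := mem_image.mp (min'_mem _ hAne)
  refine ⟨a, ha, Fin.le_def.mpr ?_⟩
  rw [hamin]
  exact hbest.trans (min'_le _ _ (mem_image_of_mem _ hb))

section SDEFX

variable {M : Type*} [DecidableEq M] {n m : ℕ} {π : Fin n → (M ≃ Fin m)} {A : Fin n → Finset M}

lemma SDEFX.card_le_succ (hA : SDEFX π A) (k l : Fin n) : (A l).card ≤ (A k).card + 1 := by
  obtain ⟨x, hx⟩ | hempty := (A l).eq_empty_or_nonempty.symm
  · have := (hA k l ⟨x, hx⟩ x hx).1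
    rw [card_erase_of_mem hx] at this
    omega
  · simp [hempty]

lemma SDEFX.sum_card_lt (hA : SDEFX π A) (k : Fin n) :
    ∑ l, (A l).card < n * ((A k).card + 1) := by
  have hothers : ∑ l ∈ univ.erase k, (A l).card ≤ (n - 1) * ((A k).card + 1) := by
    simpa [card_erase_of_mem] using
      sum_le_card_nsmul (univ.erase k) _ _ fun l _ => hA.card_le_succ k l
  have hn : 1 ≤ n := k.pos
  rw [← add_sum_erase _ _ (mem_univ k)]
  calc (A k).card + ∑ l ∈ univ.erase k, (A l).card
      < ((A k).card + 1) + (n - 1) * ((A k).card + 1) := by omega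
    _ = n * ((A k).card + 1) := by
      rw [← one_add_mul, Nat.add_sub_cancel' hn]

lemma SDEFX.eq_singleton_of_favorite_mem (hA : SDEFX π A)
    (hdisj : ∀ i j : Fin n, i ≠ j → Disjoint (A i) (A j)) {a k : Fin n} (hak : a ≠ k) {g : M}
    (hg : g ∈ A k) (hfav : ∀ x, π a g ≤ π a x) : A k = {g} := by
  refine eq_singleton_iff_unique_mem.mpr ⟨hg, fun h hh => ?_⟩
  by_contra hhg
  obtain ⟨x, hx, hxg⟩ :=
    (hA a k ⟨g, hg⟩ h hh).exists_rank_le_of_mem (mem_erase.mpr ⟨Ne.symm hhg, hg⟩)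
  obtain rfl : x = g := (π a).injective (le_antisymm hxg (hfav x))
  exact disjoint_left.mp (hdisj a k hak) hx hg

end SDEFX

lemma IsAllocation.sum_card_eq {M : Type*} [Fintype M] [DecidableEq M] {n : ℕ}
    {A : Fin n → Finset M} (hA : IsAllocation A univ) : ∑ l, (A l).card = Fintype.card M := by
  rw [← card_biUnion fun x _ y _ hxy => hA.1 x y hxy, hA.2, card_univ]

/-- With `n ≥ 2` agents and `m ≥ 2n` items, if two distinct agents have the same
most-preferred item (the item of rank `0` in their respective orders), then no allocation of all
the items is SD-EFX. -/
theorem no_sdefx_of_shared_favorite {M : Type*} [Fintype M] [DecidableEq M] (n m : ℕ)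
    (hn : 2 ≤ n) (hm : 2 * n ≤ m) (hM : Fintype.card M = m)
    (π : Fin n → (M ≃ Fin m)) (i j : Fin n) (hij : i ≠ j)
    (htop : (π i).symm ⟨0, by omega⟩ = (π j).symm ⟨0, by omega⟩) :
    ¬ ∃ A : Fin n → Finset M, IsAllocation A Finset.univ ∧ SDEFX π A := by
  rintro ⟨A, hAlloc, hA⟩
  set g := (π i).symm ⟨0, by omega⟩
  have hfav {a : Fin n} (hg : g = (π a).symm ⟨0, by omega⟩) (x : M) : π a g ≤ π a x := by
    rw [hg, Equiv.apply_symm_apply]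
    exact Nat.zero_le _
  obtain ⟨k, -, hgk⟩ : ∃ k ∈ univ, g ∈ A k := by
    rw [← mem_biUnion, hAlloc.2]; exact mem_univ g
  obtain ⟨a, hak, hga⟩ : ∃ a, a ≠ k ∧ g = (π a).symm ⟨0, by omega⟩ := by
    by_cases hik : i = k
    · exact ⟨j, hik ▸ hij.symm, htop⟩
    · exact ⟨i, hik, rfl⟩
  have hsingle := hA.eq_singleton_of_favorite_mem hAlloc.1 hak hgk (hfav hga)
  have htotal := hA.sum_card_lt k
  rw [hAlloc.sum_card_eq, hsingle, card_singleton, hM] at htotal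
  omega
end

section
/- For all integers n ≥ 2, q ≥ 2, and k with 1 ≤ k ≤ q - 1, the real Gamma function satisfies (2/n) · Γ(k + 1/n) · Γ(q - k + 1/n) / Γ(q + 1/n) ≤ (8/n) · 1/C(q, k), where C(q, k) denotes the binomial coefficient q choose k. -/
open Real

/-- Gautschi-type upper bound from log-convexity. -/
lemma gautschi_upper {x s : ℝ} (hx : 0 < x) (hs0 : 0 < s) (hs1 : s < 1) :
    Real.Gamma (x + s) ≤ Real.Gamma (x + 1) * x ^ (s - 1) := by
  have h := Real.Gamma_mul_add_mul_le_rpow_Gamma_mul_rpow_Gamma hx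
    (by linarith : (0:ℝ) < x + 1) (by linarith : 0 < 1 - s) hs0 (by ring)
  have hxs : (1 - s) * x + s * (x + 1) = x + s := by ring
  rw [hxs] at h
  have hG1 : 0 < Real.Gamma (x + 1) := Real.Gamma_pos_of_pos (by linarith)
  have hGx : Real.Gamma x = Real.Gamma (x + 1) / x := by
    rw [Real.Gamma_add_one (ne_of_gt hx)]; field_simp
  calc Real.Gamma (x + s) ≤ Real.Gamma x ^ (1 - s) * Real.Gamma (x + 1) ^ s := h
    _ = Real.Gamma (x + 1) * x ^ (s - 1) := by
        rw [hGx, Real.div_rpow hG1.le hx.le, div_mul_eq_mul_div,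
          ← Real.rpow_add hG1, show (1 - s) + s = 1 by ring, Real.rpow_one,
          show s - 1 = -(1 - s) by ring, Real.rpow_neg hx.le, div_eq_mul_inv]

/-- Gautschi-type lower bound from log-convexity. -/
lemma gautschi_lower {x s : ℝ} (hx : 0 < x) (hs0 : 0 < s) (hs1 : s < 1) :
    Real.Gamma (x + 1) ≤ Real.Gamma (x + s) * (x + 1) ^ (1 - s) := by
  have hxs : 0 < x + s := by linarith
  have h := Real.Gamma_mul_add_mul_le_rpow_Gamma_mul_rpow_Gamma hxs
    (by linarith : (0:ℝ) < x + s + 1) hs0 (by linarith : (0:ℝ) < 1 - s) (by ring)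
  have he : s * (x + s) + (1 - s) * (x + s + 1) = x + 1 := by ring
  rw [he] at h
  have hGxs : 0 < Real.Gamma (x + s) := Real.Gamma_pos_of_pos hxs
  have hadd : Real.Gamma (x + s + 1) = (x + s) * Real.Gamma (x + s) :=
    Real.Gamma_add_one (ne_of_gt hxs)
  calc Real.Gamma (x + 1) ≤ Real.Gamma (x + s) ^ s * Real.Gamma (x + s + 1) ^ (1 - s) := h
    _ = Real.Gamma (x + s) * (x + s) ^ (1 - s) := by
        rw [hadd, Real.mul_rpow hxs.le hGxs.le, ← mul_assoc, mul_comm _ ((x+s)^(1-s)),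
          mul_assoc, ← Real.rpow_add hGxs]
        ring_nf
        rw [Real.rpow_one]
    _ ≤ Real.Gamma (x + s) * (x + 1) ^ (1 - s) := by
        apply mul_le_mul_of_nonneg_left _ hGxs.le
        exact Real.rpow_le_rpow hxs.le (by linarith) (by linarith)

/-- For integers `n ≥ 2`, `q ≥ 2`, and `1 ≤ k ≤ q - 1`, the real Gamma function
satisfies `(2/n)·Γ(k + 1/n)·Γ(q - k + 1/n)/Γ(q + 1/n) ≤ (8/n)·(1/C(q,k))`. -/
theorem gamma_binomial_bound (n q k : ℕ) (hn : 2 ≤ n) (hq : 2 ≤ q)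
    (hk1 : 1 ≤ k) (hk2 : k ≤ q - 1) :
    2 / (n : ℝ) * Real.Gamma ((k : ℝ) + 1 / (n : ℝ)) *
        Real.Gamma ((q : ℝ) - (k : ℝ) + 1 / (n : ℝ)) /
        Real.Gamma ((q : ℝ) + 1 / (n : ℝ)) ≤
      8 / (n : ℝ) * (1 / (Nat.choose q k : ℝ)) := by
  set s : ℝ := 1 / (n : ℝ) with hs
  have hn0 : (0:ℝ) < n := by positivity
  have hs0 : 0 < s := by positivity
  have hs1 : s < 1 := by
    rw [hs, div_lt_one hn0]; exact_mod_cast hn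
  -- m = q - k
  set m : ℕ := q - k with hm
  have hkq : k ≤ q := le_trans hk2 (Nat.sub_le q 1)
  have hm1 : 1 ≤ m := by omega
  have hmcast : (q : ℝ) - (k : ℝ) = (m : ℝ) := by
    rw [hm]; push_cast [Nat.cast_sub hkq]; ring
  have hk0 : (0:ℝ) < k := by exact_mod_cast hk1
  have hm0 : (0:ℝ) < m := by exact_mod_cast hm1
  have hq0 : (0:ℝ) < q := by positivity
  -- Gautschi bounds
  have hA := gautschi_upper hk0 hs0 hs1
  have hB := gautschi_upper hm0 hs0 hs1
  have hG := gautschi_lower hq0 hs0 hs1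
  rw [Real.Gamma_nat_eq_factorial] at hA hB hG
  have hGpos : 0 < Real.Gamma ((q:ℝ) + s) := Real.Gamma_pos_of_pos (by linarith)
  have hApos : 0 < Real.Gamma ((k:ℝ) + s) := Real.Gamma_pos_of_pos (by linarith)
  have hBpos : 0 < Real.Gamma ((m:ℝ) + s) := Real.Gamma_pos_of_pos (by linarith)
  have hC : (q.choose k : ℝ) * (k.factorial : ℝ) * (m.factorial : ℝ) = (q.factorial : ℝ) := by
    exact_mod_cast congrArg Nat.cast (Nat.choose_mul_factorial_mul_factorial hkq)
  have hCpos : (0:ℝ) < (q.choose k : ℝ) := by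
    exact_mod_cast Nat.choose_pos hkq
  -- core inequality: Γ(k+s)Γ(m+s) ≤ (4 / C) * Γ(q+s)
  have hkm : (q:ℝ) + 1 ≤ 3 * ((k:ℝ) * (m:ℝ)) := by
    have hk1r : (1:ℝ) ≤ (k:ℝ) := by exact_mod_cast hk1
    have hm1r : (1:ℝ) ≤ (m:ℝ) := by exact_mod_cast hm1
    have hsum : (k:ℝ) + (m:ℝ) = (q:ℝ) := by linarith [hmcast]
    have h1 : (q:ℝ) - 1 ≤ (k:ℝ) * (m:ℝ) := by
      nlinarith [mul_nonneg (sub_nonneg.2 hk1r) (sub_nonneg.2 hm1r)]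
    have hq2 : (2:ℝ) ≤ (q:ℝ) := by exact_mod_cast hq
    linarith
  set t : ℝ := 1 - s with ht
  have ht0 : 0 < t := by linarith
  have ht1 : t ≤ 1 := by linarith
  -- rpow part: (q+1)^t ≤ 4 * (k*m)^t, hence (k*m)^(s-1) ≤ 4 * (q+1)^(s-1)... do directly
  have hrpow : ((q:ℝ) + 1) ^ t ≤ 4 * ((k:ℝ) * m) ^ t := by
    have h1 : ((q:ℝ) + 1) ^ t ≤ (3 * ((k:ℝ) * m)) ^ t :=
      Real.rpow_le_rpow (by positivity) hkm ht0.le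
    have h2 : (3 * ((k:ℝ) * m)) ^ t = (3:ℝ) ^ t * ((k:ℝ) * m) ^ t :=
      Real.mul_rpow (by norm_num) (by positivity)
    have h3 : (3:ℝ) ^ t ≤ 3 := by
      calc (3:ℝ) ^ t ≤ (3:ℝ) ^ (1:ℝ) :=
            Real.rpow_le_rpow_of_exponent_le (by norm_num) ht1
        _ = 3 := Real.rpow_one 3
    have h4 : (0:ℝ) ≤ ((k:ℝ) * m) ^ t := by positivity
    nlinarith
  -- assemble core
  have hcore : Real.Gamma ((k:ℝ) + s) * Real.Gamma ((m:ℝ) + s) ≤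
      (4 / (q.choose k : ℝ)) * Real.Gamma ((q:ℝ) + s) := by
    have hAB : Real.Gamma ((k:ℝ) + s) * Real.Gamma ((m:ℝ) + s) ≤
        (k.factorial : ℝ) * (m.factorial : ℝ) * ((k:ℝ) * m) ^ (s - 1) := by
      have := mul_le_mul hA hB hBpos.le (by positivity)
      calc Real.Gamma ((k:ℝ) + s) * Real.Gamma ((m:ℝ) + s)
          ≤ (k.factorial : ℝ) * (k:ℝ) ^ (s-1) * ((m.factorial : ℝ) * (m:ℝ) ^ (s-1)) := this
        _ = (k.factorial : ℝ) * (m.factorial : ℝ) * ((k:ℝ) ^ (s-1) * (m:ℝ) ^ (s-1)) := by ring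
        _ = (k.factorial : ℝ) * (m.factorial : ℝ) * ((k:ℝ) * m) ^ (s - 1) := by
            rw [Real.mul_rpow hk0.le hm0.le]
    have hGlow : (q.factorial : ℝ) * (((q:ℝ)+1) ^ t)⁻¹ ≤ Real.Gamma ((q:ℝ) + s) := by
      rw [← div_eq_mul_inv, div_le_iff₀ (by positivity)]
      linarith [hG]
    -- key numeric inequality
    have hnum : (k.factorial : ℝ) * (m.factorial : ℝ) * ((k:ℝ) * m) ^ (s - 1) ≤
        (4 / (q.choose k : ℝ)) * ((q.factorial : ℝ) * (((q:ℝ)+1) ^ t)⁻¹) := by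
      have hfk : (0:ℝ) < (k.factorial : ℝ) := by exact_mod_cast Nat.factorial_pos k
      have hfm : (0:ℝ) < (m.factorial : ℝ) := by exact_mod_cast Nat.factorial_pos m
      have hkmpos : (0:ℝ) < (k:ℝ) * m := by positivity
      have hq1pos : (0:ℝ) < ((q:ℝ)+1) ^ t := by positivity
      have hkmtpos : (0:ℝ) < ((k:ℝ) * m) ^ t := by positivity
      have hkmrw : ((k:ℝ) * m) ^ (s - 1) = (((k:ℝ) * m) ^ t)⁻¹ := by
        rw [← Real.rpow_neg hkmpos.le]; congr 1; rw [ht]; ring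
      have hinv : (((k:ℝ) * m) ^ t)⁻¹ ≤ 4 * ((((q:ℝ)+1) ^ t)⁻¹) := by
        have h5 : (1:ℝ) ≤ 4 * (((k:ℝ) * m) ^ t) * ((((q:ℝ)+1) ^ t)⁻¹) := by
          rw [← div_eq_mul_inv, le_div_iff₀ hq1pos]; linarith
        calc (((k:ℝ) * m) ^ t)⁻¹ = (((k:ℝ) * m) ^ t)⁻¹ * 1 := by ring
          _ ≤ (((k:ℝ) * m) ^ t)⁻¹ * (4 * (((k:ℝ) * m) ^ t) * ((((q:ℝ)+1) ^ t)⁻¹)) :=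
              mul_le_mul_of_nonneg_left h5 (by positivity)
          _ = 4 * ((((q:ℝ)+1) ^ t)⁻¹) := by field_simp
      rw [hkmrw, ← hC]
      calc (k.factorial : ℝ) * (m.factorial : ℝ) * (((k:ℝ) * m) ^ t)⁻¹
          ≤ (k.factorial : ℝ) * (m.factorial : ℝ) * (4 * ((((q:ℝ)+1) ^ t)⁻¹)) :=
            mul_le_mul_of_nonneg_left hinv (by positivity)
        _ = 4 / (q.choose k : ℝ) *
            ((q.choose k : ℝ) * (k.factorial : ℝ) * (m.factorial : ℝ) * ((((q:ℝ)+1) ^ t)⁻¹)) := by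
            field_simp
    calc Real.Gamma ((k:ℝ) + s) * Real.Gamma ((m:ℝ) + s)
        ≤ (k.factorial : ℝ) * (m.factorial : ℝ) * ((k:ℝ) * m) ^ (s - 1) := hAB
      _ ≤ (4 / (q.choose k : ℝ)) * ((q.factorial : ℝ) * (((q:ℝ)+1) ^ t)⁻¹) := hnum
      _ ≤ (4 / (q.choose k : ℝ)) * Real.Gamma ((q:ℝ) + s) := by
          apply mul_le_mul_of_nonneg_left hGlow (by positivity)
  -- finish
  rw [hmcast]
  rw [div_le_iff₀ hGpos]
  have h2n : (0:ℝ) < 2 / (n:ℝ) := by positivity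
  calc 2 / (n:ℝ) * Real.Gamma ((k:ℝ) + s) * Real.Gamma ((m:ℝ) + s)
      = 2 / (n:ℝ) * (Real.Gamma ((k:ℝ) + s) * Real.Gamma ((m:ℝ) + s)) := by ring
    _ ≤ 2 / (n:ℝ) * ((4 / (q.choose k : ℝ)) * Real.Gamma ((q:ℝ) + s)) :=
        mul_le_mul_of_nonneg_left hcore h2n.le
    _ = 8 / (n:ℝ) * (1 / (q.choose k : ℝ)) * Real.Gamma ((q:ℝ) + s) := by ring
end

section
/- For every integer q ≥ 2, the sum over k from 1 to q - 1 of 1/C(q, k) is at most 4/q, where C(q, k) denotes the binomial coefficient q choose k. -/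
/-! The outer terms k = 1 and k = q - 1 contribute 1/q each. By unimodality of the row, each of the
q - 3 remaining terms is at most 1/C(q, 2) = 2/(q(q - 1)), so together they contribute at most 2/q. -/

open Finset

namespace Nat

theorem choose_le_choose_of_le_of_le_half {n a b : ℕ} (hab : a ≤ b) (hb : b ≤ n / 2) :
    n.choose a ≤ n.choose b := by
  induction b, hab using Nat.le_induction with
  | base => exact le_rfl
  | succ b _ ih => exact (ih (by omega)).trans (choose_le_succ_of_lt_half_left (by omega))

theorem choose_le_choose_of_le_of_le_sub {n a k : ℕ} (hak : a ≤ k) (hkn : k ≤ n - a) :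
    n.choose a ≤ n.choose k := by
  rcases le_or_gt k (n / 2) with hk | hk
  · exact choose_le_choose_of_le_of_le_half hak hk
  · rw [← choose_symm (by omega : k ≤ n)]
    exact choose_le_choose_of_le_of_le_half (by omega) (by omega)

end Nat

theorem sum_Icc_two_inv_choose_le {q : ℕ} (hq : 3 ≤ q) :
    ∑ k ∈ Icc 2 (q - 2), (1 : ℝ) / q.choose k ≤ 2 / q := by
  have hq' : (3 : ℝ) ≤ q := by exact_mod_cast hq
  have hq1 : (0 : ℝ) < q - 1 := by linarith
  have term_le : ∀ k ∈ Icc 2 (q - 2), (1 : ℝ) / q.choose k ≤ 1 / q.choose 2 := by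
    intro k hk
    rw [mem_Icc] at hk
    gcongr
    · exact_mod_cast Nat.choose_pos (by omega)
    · exact_mod_cast Nat.choose_le_choose_of_le_of_le_sub hk.1 hk.2
  have card_eq : ((Icc 2 (q - 2)).card : ℝ) = q - 3 := by
    rw [Nat.card_Icc, Nat.cast_sub (by omega)]
    push_cast [Nat.cast_sub (by omega : 2 ≤ q)]
    ring
  calc ∑ k ∈ Icc 2 (q - 2), (1 : ℝ) / q.choose k
      ≤ (Icc 2 (q - 2)).card • ((1 : ℝ) / q.choose 2) := sum_le_card_nsmul _ _ _ term_le
    _ = (q - 3) * (2 / (q * (q - 1))) := by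
      rw [nsmul_eq_mul, card_eq, Nat.cast_choose_two, one_div_div]
    _ ≤ (q - 1) * (2 / (q * (q - 1))) :=
      mul_le_mul_of_nonneg_right (by linarith) (div_pos two_pos (by positivity)).le
    _ = 2 / q := by field_simp

theorem sum_inv_binomial_bound_general (q : ℕ) :
    ∑ k ∈ Finset.Icc 1 (q - 1), (1 : ℝ) / (Nat.choose q k : ℝ) ≤ 4 / (q : ℝ) := by
  rcases le_or_gt q 2 with hq | hq
  · interval_cases q <;> norm_num
  have split : Icc 1 (q - 1) = insert 1 (insert (q - 1) (Icc 2 (q - 2))) := by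
    ext k; simp only [mem_Icc, mem_insert]; omega
  rw [split, sum_insert (by simp only [mem_insert, mem_Icc]; omega),
    sum_insert (by simp only [mem_Icc]; omega), Nat.choose_one_right,
    Nat.choose_symm (by omega), Nat.choose_one_right]
  calc 1 / (q : ℝ) + (1 / q + ∑ k ∈ Icc 2 (q - 2), (1 : ℝ) / q.choose k)
      ≤ 1 / q + (1 / q + 2 / q) := by gcongr; exact sum_Icc_two_inv_choose_le hq
    _ = 4 / q := by ring

/-- For every integer `q ≥ 2`, the sum of the reciprocals of the interior binomial
coefficients of row `q` is at most `4/q`. -/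
theorem sum_inv_binomial_bound (q : ℕ) (hq : 2 ≤ q) :
    ∑ k ∈ Finset.Icc 1 (q - 1), (1 : ℝ) / (Nat.choose q k : ℝ) ≤ 4 / (q : ℝ) :=
  sum_inv_binomial_bound_general q
end

section
/- Let m ≥ 2 be even and let M be a set of m items. Let E be a family of (m/2)-element subsets of M such that for every S ⊆ M with |S| = m/2, exactly one of S and M \ S belongs to E. Then there exists a valuation v' : 2^M → ℝ≥0 that is monotone (S ⊆ T implies v'(S) ≤ v'(T)) and submodular (v'(S ∪ T) + v'(S ∩ T) ≤ v'(S) + v'(T) for all S, T ⊆ M) such that for every S ⊆ M with |S| = m/2, S ∈ E if and only if v'(S) > v'(M \ S). -/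
open scoped Classical

/-- Auxiliary: the "concave" part of the valuation, as an integer. -/
noncomputable def submodAuxF (m n : ℕ) : ℤ := (n : ℤ) * (2 * (m : ℤ) - (n : ℤ))

/-- Auxiliary: the integer-valued valuation. -/
noncomputable def submodAuxW {M : Type*} [Fintype M] [DecidableEq M] (m : ℕ)
    (E : Set (Finset M)) (S : Finset M) : ℤ :=
  submodAuxF m S.card + (if S.card = m / 2 ∧ S ∈ E then 1 else 0)

lemma submodAuxF_mono (m a b : ℕ) (hab : a < b) (hbm : b ≤ m) :
    submodAuxF m a + 1 ≤ submodAuxF m b := by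
  unfold submodAuxF
  have h1 : (a : ℤ) + 1 ≤ (b : ℤ) := by exact_mod_cast hab
  have h2 : (b : ℤ) ≤ (m : ℤ) := by exact_mod_cast hbm
  have hpos : 0 < ((b : ℤ) - a) * (2 * (m : ℤ) - a - b) := by
    apply mul_pos <;> linarith
  have := Int.add_one_le_of_lt hpos
  nlinarith

lemma submodAuxF_nonneg (m n : ℕ) (h : n ≤ m) : 0 ≤ submodAuxF m n := by
  unfold submodAuxF
  have h1 : (n : ℤ) ≤ (m : ℤ) := by exact_mod_cast h
  have h0 : (0 : ℤ) ≤ (n : ℤ) := Int.ofNat_nonneg n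
  nlinarith

/-- Let `m ≥ 2` be even and let `E` be a family of `m/2`-element subsets of `M`
containing exactly one of `S`, `Mᶜ S` for every `S` of size `m/2`.  Then there is a monotone,
submodular, non-negative valuation `v'` whose induced preference hypergraph on `m/2`-element
bundles is exactly `E`. -/
theorem exists_monotone_submodular_realizing {M : Type*} [Fintype M] [DecidableEq M] (m : ℕ)
    (hm : 2 ≤ m) (heven : Even m) (hM : Fintype.card M = m) (E : Set (Finset M))
    (hE : ∀ S ∈ E, S.card = m / 2)
    (hxor : ∀ S : Finset M, S.card = m / 2 → (S ∈ E ↔ Sᶜ ∉ E)) :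
    ∃ v' : Finset M → ℝ,
      (∀ S : Finset M, 0 ≤ v' S) ∧
      (∀ S T : Finset M, S ⊆ T → v' S ≤ v' T) ∧
      (∀ S T : Finset M, v' (S ∪ T) + v' (S ∩ T) ≤ v' S + v' T) ∧
      (∀ S : Finset M, S.card = m / 2 → (S ∈ E ↔ v' S > v' Sᶜ)) := by
  classical
  have hcardle : ∀ S : Finset M, S.card ≤ m := fun S => by
    simpa [hM] using Finset.card_le_univ S
  have h2k : m / 2 + m / 2 = m := by
    obtain ⟨r, hr⟩ := heven; omega
  -- nonnegativity of w
  have hwnonneg : ∀ S : Finset M, 0 ≤ submodAuxW m E S := by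
    intro S
    have h1 := submodAuxF_nonneg m S.card (hcardle S)
    unfold submodAuxW
    split <;> linarith
  -- monotonicity of w
  have hwmono : ∀ S T : Finset M, S ⊆ T → submodAuxW m E S ≤ submodAuxW m E T := by
    intro S T h
    rcases lt_or_eq_of_le (Finset.card_le_card h) with hlt | heq
    · have h1 := submodAuxF_mono m S.card T.card hlt (hcardle T)
      unfold submodAuxW
      split <;> split <;> linarith
    · have : S = T := Finset.eq_of_subset_of_card_le h (le_of_eq heq.symm)
      rw [this]
  -- submodularity of w
  have hwsub : ∀ S T : Finset M,
      submodAuxW m E (S ∪ T) + submodAuxW m E (S ∩ T) ≤ submodAuxW m E S + submodAuxW m E T := by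
    intro S T
    have hcard : (S ∪ T).card + (S ∩ T).card = S.card + T.card :=
      Finset.card_union_add_card_inter S T
    have hia : (S ∩ T).card ≤ S.card := Finset.card_le_card Finset.inter_subset_left
    have hib : (S ∩ T).card ≤ T.card := Finset.card_le_card Finset.inter_subset_right
    have hident : submodAuxF m (S ∪ T).card + submodAuxF m (S ∩ T).card
        + 2 * ((S.card : ℤ) - (S ∩ T).card) * ((T.card : ℤ) - (S ∩ T).card)
        = submodAuxF m S.card + submodAuxF m T.card := by
      unfold submodAuxF
      have h : ((S ∪ T).card : ℤ) + ((S ∩ T).card : ℤ) = (S.card : ℤ) + (T.card : ℤ) := by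
        exact_mod_cast hcard
      linear_combination (2 * (m : ℤ) - S.card - T.card + (S ∩ T).card - (S ∪ T).card) * h
    -- helper facts about collapses
    have hIS : (S ∩ T).card = S.card → S ∩ T = S := fun h =>
      Finset.eq_of_subset_of_card_le Finset.inter_subset_left (le_of_eq h.symm)
    have hIT : (S ∩ T).card = T.card → S ∩ T = T := fun h =>
      Finset.eq_of_subset_of_card_le Finset.inter_subset_right (le_of_eq h.symm)
    -- claim about the bonuses
    have hclaim :
        ((if (S ∪ T).card = m / 2 ∧ S ∪ T ∈ E then (1:ℤ) else 0)
          + (if (S ∩ T).card = m / 2 ∧ S ∩ T ∈ E then (1:ℤ) else 0)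
          ≤ (if S.card = m / 2 ∧ S ∈ E then (1:ℤ) else 0)
          + (if T.card = m / 2 ∧ T ∈ E then (1:ℤ) else 0))
        ∨ ((S ∩ T).card < S.card ∧ (S ∩ T).card < T.card) := by
      by_cases hU : (S ∪ T).card = m / 2 ∧ S ∪ T ∈ E
      · by_cases hI : (S ∩ T).card = m / 2 ∧ S ∩ T ∈ E
        · -- all four sets coincide
          have hIU : S ∩ T = S ∪ T := by
            apply Finset.eq_of_subset_of_card_le
              (Finset.inter_subset_left.trans Finset.subset_union_left)
            omega
          have hST : S = T := Finset.Subset.antisymm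
            (Finset.subset_union_left.trans ((le_of_eq hIU.symm : S ∪ T ⊆ S ∩ T).trans Finset.inter_subset_right))
            (Finset.subset_union_right.trans ((le_of_eq hIU.symm : S ∪ T ⊆ S ∩ T).trans Finset.inter_subset_left))
          left
          rw [hST, Finset.union_self, Finset.inter_self]
        · by_cases hS' : S.card = m / 2 ∧ S ∈ E
          · left; simp only [if_pos hU, if_neg hI, if_pos hS']
            split <;> norm_num
          · by_cases hT' : T.card = m / 2 ∧ T ∈ E
            · left; simp only [if_pos hU, if_neg hI, if_neg hS', if_pos hT']
              norm_num
            · right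
              constructor
              · rcases lt_or_eq_of_le hia with h | h
                · exact h
                · exfalso
                  have hsub : S ⊆ T := Finset.inter_eq_left.mp (hIS h)
                  have : S ∪ T = T := Finset.union_eq_right.mpr hsub
                  rw [this] at hU; exact hT' hU
              · rcases lt_or_eq_of_le hib with h | h
                · exact h
                · exfalso
                  have hsub : T ⊆ S := Finset.inter_eq_right.mp (hIT h)
                  have : S ∪ T = S := Finset.union_eq_left.mpr hsub
                  rw [this] at hU; exact hS' hU
      · by_cases hI : (S ∩ T).card = m / 2 ∧ S ∩ T ∈ E
        · by_cases hS' : S.card = m / 2 ∧ S ∈ E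
          · left; simp only [if_neg hU, if_pos hI, if_pos hS']
            split <;> norm_num
          · by_cases hT' : T.card = m / 2 ∧ T ∈ E
            · left; simp only [if_neg hU, if_pos hI, if_neg hS', if_pos hT']
              norm_num
            · right
              constructor
              · rcases lt_or_eq_of_le hia with h | h
                · exact h
                · exfalso
                  have := hIS h
                  rw [this] at hI; exact hS' hI
              · rcases lt_or_eq_of_le hib with h | h
                · exact h
                · exfalso
                  have := hIT h
                  rw [this] at hI; exact hT' hI
        · left; simp only [if_neg hU, if_neg hI]
          norm_num
          split <;> split <;> norm_num
    unfold submodAuxW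
    rcases hclaim with h | ⟨h1, h2⟩
    · have hgap : 0 ≤ 2 * ((S.card : ℤ) - (S ∩ T).card) * ((T.card : ℤ) - (S ∩ T).card) := by
        have h1 : ((S ∩ T).card : ℤ) ≤ S.card := by exact_mod_cast hia
        have h2 : ((S ∩ T).card : ℤ) ≤ T.card := by exact_mod_cast hib
        have := mul_nonneg (by linarith : (0:ℤ) ≤ (S.card : ℤ) - (S ∩ T).card)
          (by linarith : (0:ℤ) ≤ (T.card : ℤ) - (S ∩ T).card)
        linarith
      linarith
    · have hg1 : (1:ℤ) ≤ (S.card : ℤ) - (S ∩ T).card := by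
        have : ((S ∩ T).card : ℤ) < S.card := by exact_mod_cast h1
        linarith
      have hg2 : (1:ℤ) ≤ (T.card : ℤ) - (S ∩ T).card := by
        have : ((S ∩ T).card : ℤ) < T.card := by exact_mod_cast h2
        linarith
      have hgap : (2:ℤ) ≤ 2 * ((S.card : ℤ) - (S ∩ T).card) * ((T.card : ℤ) - (S ∩ T).card) := by
        nlinarith
      have b1 : (if (S ∪ T).card = m / 2 ∧ S ∪ T ∈ E then (1:ℤ) else 0) ≤ 1 := by
        split <;> norm_num
      have b2 : (if (S ∩ T).card = m / 2 ∧ S ∩ T ∈ E then (1:ℤ) else 0) ≤ 1 := by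
        split <;> norm_num
      have b3 : (0:ℤ) ≤ (if S.card = m / 2 ∧ S ∈ E then (1:ℤ) else 0) := by
        split <;> norm_num
      have b4 : (0:ℤ) ≤ (if T.card = m / 2 ∧ T ∈ E then (1:ℤ) else 0) := by
        split <;> norm_num
      linarith
  -- the realization property
  refine ⟨fun S => ((submodAuxW m E S : ℤ) : ℝ),
    fun S => by
      show (0:ℝ) ≤ ((submodAuxW m E S : ℤ) : ℝ)
      exact_mod_cast hwnonneg S,
    fun S T h => by
      show ((submodAuxW m E S : ℤ) : ℝ) ≤ ((submodAuxW m E T : ℤ) : ℝ)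
      exact_mod_cast hwmono S T h,
    fun S T => by
      show ((submodAuxW m E (S ∪ T) : ℤ) : ℝ) + ((submodAuxW m E (S ∩ T) : ℤ) : ℝ)
        ≤ ((submodAuxW m E S : ℤ) : ℝ) + ((submodAuxW m E T : ℤ) : ℝ)
      exact_mod_cast hwsub S T, ?_⟩
  intro S hS
  have hSc : Sᶜ.card = m / 2 := by
    rw [Finset.card_compl, hM, hS]; omega
  have hcc : Sᶜᶜ = S := compl_compl S
  have hx := hxor S hS
  have hx2 := hxor Sᶜ hSc
  rw [hcc] at hx2
  constructor
  · intro hSE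
    have hScE : Sᶜ ∉ E := hx.mp hSE
    have : submodAuxW m E Sᶜ < submodAuxW m E S := by
      unfold submodAuxW
      rw [if_neg (fun h => hScE h.2), if_pos ⟨hS, hSE⟩, hS, hSc]
      linarith
    show ((submodAuxW m E S : ℤ) : ℝ) > ((submodAuxW m E Sᶜ : ℤ) : ℝ)
    exact_mod_cast this
  · intro hgt
    by_contra hSE
    have hScE : Sᶜ ∈ E := by
      by_contra h
      exact hSE (hx.mpr (by simpa using h))
    have : submodAuxW m E S < submodAuxW m E Sᶜ := by
      unfold submodAuxW
      rw [if_neg (fun h => hSE h.2), if_pos ⟨hSc, hScE⟩, hS, hSc]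
      linarith
    have hgtR : ((submodAuxW m E S : ℤ) : ℝ) > ((submodAuxW m E Sᶜ : ℤ) : ℝ) := hgt
    have hgt' : submodAuxW m E Sᶜ < submodAuxW m E S := by exact_mod_cast hgtR
    omega
end

section
/- Let π₁, ..., π_n be strict linear orders on a finite set M of items, let M' ⊆ M, and let (A₁, ..., A_n) be an allocation of M' that is SD-EF with respect to (π₁, ..., π_n) (restricted to M'). Suppose that for every agent i, every item of M \ M' is strictly less preferred under π_i than every item of A_i. Let (B₁, ..., B_n) be an allocation of M such that A_i ⊆ B_i and |B_i \ A_i| ≤ 1 for every agent i. Then (B₁, ..., B_n) is SD-EFX with respect to (π₁, ..., π_n). -/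
/-- The allocation `A` is SD-envy-free with respect to the profile of orders `π`. -/
def SDEF {M : Type*} [DecidableEq M] {n m : ℕ} (π : Fin n → (M ≃ Fin m))
    (A : Fin n → Finset M) : Prop :=
  ∀ i j : Fin n, sdDom (π i) (A i) (A j)

open Finset

theorem Nat.nth_lt_iff_lt_count {p : ℕ → Prop} [DecidablePred p] (hf : (Set.ofPred p).Finite)
    {k x : ℕ} (hk : k < #hf.toFinset) : Nat.nth p k < x ↔ k < Nat.count p x := by
  refine ⟨fun h => ?_, Nat.nth_lt_of_lt_count⟩
  calc k < Nat.count p (Nat.nth p k + 1) := by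
        rw [Nat.count_nth_succ fun _ => hk]; exact k.lt_succ_self
    _ ≤ Nat.count p x := Nat.count_monotone p h

namespace Finset

theorem sort_getD_lt_iff (s : Finset ℕ) {k x : ℕ} (hk : k < #s) :
    (s.sort (· ≤ ·)).getD k 0 < x ↔ k < #{y ∈ s | y < x} := by
  have hnth : (s.sort (· ≤ ·)).getD k 0 = Nat.nth (· ∈ s) k := by
    rw [Nat.nth_eq_getD_sort (p := (· ∈ s)) s.finite_toSet]; simp
  have hcount : Nat.count (· ∈ s) x = #{y ∈ s | y < x} := by
    rw [Nat.count_eq_card_filter_range]; congr 1; ext y; simp [and_comm]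
  rw [hnth, Nat.nth_lt_iff_lt_count (p := (· ∈ s)) s.finite_toSet (by simpa using hk), hcount]

theorem card_le_and_sort_getD_le_iff {s t : Finset ℕ} :
    (#t ≤ #s ∧ ∀ k < #t, (s.sort (· ≤ ·)).getD k 0 ≤ (t.sort (· ≤ ·)).getD k 0) ↔
      ∀ x, #{y ∈ t | y < x} ≤ #{y ∈ s | y < x} := by
  constructor
  · rintro ⟨hcard, hle⟩ x
    by_contra! hlt
    set d := #{y ∈ s | y < x}
    have hdt : d < #t := hlt.trans_le (card_filter_le _ _)
    have htd : (t.sort (· ≤ ·)).getD d 0 < x := (t.sort_getD_lt_iff hdt).2 hlt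
    have hsd := (s.sort_getD_lt_iff (hdt.trans_le hcard)).1 ((hle d hdt).trans_lt htd)
    exact hsd.false
  · intro hcount
    refine ⟨?_, fun k hk => ?_⟩
    · have hall : #{y ∈ t | y < t.sup id + 1} = #t := by
        congr 1
        exact filter_true_of_mem fun y hy => Nat.lt_succ_of_le (le_sup (f := id) hy)
      exact hall ▸ (hcount _).trans (card_filter_le _ _)
    · have hkt : k < #{y ∈ t | y < (t.sort (· ≤ ·)).getD k 0 + 1} :=
        (t.sort_getD_lt_iff hk).1 (Nat.lt_succ_self _)
      have hks := hkt.trans_le (hcount _)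
      exact Nat.le_of_lt_succ ((s.sort_getD_lt_iff (hks.trans_le (card_filter_le _ _))).2 hks)

end Finset

theorem sdDom_iff_card_filter_lt {M : Type*} [DecidableEq M] {m : ℕ} (π : M ≃ Fin m)
    (A B : Finset M) :
    sdDom π A B ↔ ∀ x : ℕ, #{b ∈ B | (π b : ℕ) < x} ≤ #{a ∈ A | (π a : ℕ) < x} := by
  have hinj : Function.Injective fun a => ((π a : Fin m) : ℕ) :=
    Fin.val_injective.comp π.injective
  simp only [sdDom, ← card_image_of_injective _ hinj, card_le_and_sort_getD_le_iff, filter_image]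

theorem IsAllocation.notMem_of_mem_sdiff {M : Type*} [DecidableEq M] {n : ℕ}
    {A B : Fin n → Finset M} {S T : Finset M} (hA : IsAllocation A S) (hB : IsAllocation B T)
    (hsub : ∀ i, A i ⊆ B i) {i : Fin n} {x : M} (hx : x ∈ B i \ A i) : x ∉ S := by
  rw [← hA.2, mem_biUnion]
  rintro ⟨j, -, hxj⟩
  obtain ⟨hxB, hxA⟩ := mem_sdiff.1 hx
  have hij : i ≠ j := by rintro rfl; exact hxA hxj
  exact disjoint_left.1 (hB.1 i j hij) hxB (hsub j hxj)

/-- If `(A₁, …, Aₙ)` is an SD-EF allocation of `M' ⊆ M`, every item outside `M'`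
is strictly less preferred by each agent `i` than every item of `A_i` (strictly less preferred
means strictly larger rank), and `(B₁, …, Bₙ)` is an allocation of `M` with `A_i ⊆ B_i` and
`|B_i \ A_i| ≤ 1` for every `i`, then `(B₁, …, Bₙ)` is SD-EFX. -/
theorem sdefx_of_sdef_extension {M : Type*} [Fintype M] [DecidableEq M] (n m : ℕ)
    (π : Fin n → (M ≃ Fin m)) (M' : Finset M)
    (A : Fin n → Finset M) (hA : IsAllocation A M') (hef : SDEF π A)
    (hworse : ∀ i : Fin n, ∀ g ∈ M'ᶜ, ∀ a ∈ A i, π i a < π i g)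
    (B : Fin n → Finset M) (hB : IsAllocation B Finset.univ)
    (hsub : ∀ i : Fin n, A i ⊆ B i) (hone : ∀ i : Fin n, (B i \ A i).card ≤ 1) :
    SDEFX π B := by
  intro i j _ g hg
  rw [sdDom_iff_card_filter_lt]
  intro x
  have hBi : #{a ∈ A i | (π i a : ℕ) < x} ≤ #{b ∈ B i | (π i b : ℕ) < x} :=
    card_le_card (filter_subset_filter _ (hsub i))
  by_cases hcut : ∃ c ∈ B j \ A j, (π i c : ℕ) < x
  · obtain ⟨c, hc, hcx⟩ := hcut
    have hcM' : c ∈ M'ᶜ := mem_compl.2 (hA.notMem_of_mem_sdiff hB hsub hc)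
    have hAi : {a ∈ A i | (π i a : ℕ) < x} = A i :=
      filter_true_of_mem fun a ha => (Fin.lt_def.1 (hworse i c hcM' a ha)).trans hcx
    have hcardBj := card_sdiff_add_card_eq_card (hsub j)
    calc #{b ∈ (B j).erase g | (π i b : ℕ) < x} ≤ #((B j).erase g) := card_filter_le _ _
      _ = #(B j) - 1 := card_erase_of_mem hg
      _ ≤ #(A j) := by have := hone j; omega
      _ ≤ #(A i) := (hef i j).1
      _ ≤ #{b ∈ B i | (π i b : ℕ) < x} := hAi ▸ hBi
  · push Not at hcut
    calc #{b ∈ (B j).erase g | (π i b : ℕ) < x} ≤ #{a ∈ A j | (π i a : ℕ) < x} := by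
          refine card_le_card fun c hc => ?_
          obtain ⟨hcB, hcx⟩ := mem_filter.1 hc
          refine mem_filter.2 ⟨?_, hcx⟩
          by_contra hcA
          exact (hcut c (mem_sdiff.2 ⟨mem_of_mem_erase hcB, hcA⟩)).not_gt hcx
      _ ≤ #{a ∈ A i | (π i a : ℕ) < x} := (sdDom_iff_card_filter_lt _ _ _).1 (hef i j) x
      _ ≤ #{b ∈ B i | (π i b : ℕ) < x} := hBi
end

section
/- Let n ≥ 2 and m ≥ 2n, and let M be a set of m items. There exists a valuation v : 2^M → ℝ≥0 (one can take a unit-demand valuation, identical for all agents) such that if each of the n agents receives the renamed valuation v^{π_i}, where π₁, ..., π_n are independent uniformly random permutations of M, then the probability that no envy-free allocation of M among the n agents exists is at least min(n²/(8m), 1/8). -/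
open Finset Function Equiv

lemma exp_neg_le_one_sub_min_half {t : ℝ} (ht : 0 ≤ t) :
    Real.exp (-t) ≤ 1 - min (t / 2) (1 / 2) := by
  have h_inv : Real.exp (-t) ≤ 1 / (1 + t) := by
    rw [Real.exp_neg, ← one_div]
    exact one_div_le_one_div_of_le (by positivity) (by linarith [Real.add_one_le_exp t])
  refine h_inv.trans ?_
  rw [div_le_iff₀ (by positivity)]
  rcases le_total t 1 with h | h
  · rw [min_eq_left (by linarith)]; nlinarith
  · rw [min_eq_right (by linarith)]; nlinarith

lemma Nat.descFactorial_le_pow_mul_exp {m n : ℕ} (hnm : n ≤ m) :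
    (m.descFactorial n : ℝ) ≤ (m : ℝ) ^ n * Real.exp (-(n * (n - 1) / (2 * m))) := by
  induction n with
  | zero => simp
  | succ n ih =>
    have hm : (0 : ℝ) < m := by exact_mod_cast (by omega : 0 < m)
    have h_factor : (m : ℝ) - n ≤ m * Real.exp (-(n / m)) := by
      calc (m : ℝ) - n = m * (1 - n / m) := by field_simp
        _ ≤ m * Real.exp (-(n / m)) := by gcongr; exact Real.one_sub_le_exp_neg _
    have h_exp : Real.exp (-(n / m)) * Real.exp (-(n * (n - 1) / (2 * m))) =
        Real.exp (-((n + 1 : ℕ) * ((n + 1 : ℕ) - 1) / (2 * m))) := by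
      rw [← Real.exp_add]; congr 1; push_cast; field_simp; ring
    rw [Nat.descFactorial_succ, Nat.cast_mul, Nat.cast_sub (by omega), pow_succ, ← h_exp]
    calc ((m : ℝ) - n) * m.descFactorial n
        ≤ (m * Real.exp (-(n / m))) * ((m : ℝ) ^ n * Real.exp (-(n * (n - 1) / (2 * m)))) :=
          mul_le_mul h_factor (ih (by omega)) (by positivity) (by positivity)
      _ = _ := by ring

lemma Nat.descFactorial_le_one_sub_min_mul_pow {m n : ℕ} (hn : 2 ≤ n) (hnm : n ≤ m) :
    (m.descFactorial n : ℝ) ≤ (1 - min ((n : ℝ) ^ 2 / (8 * m)) (1 / 8)) * (m : ℝ) ^ n := by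
  have hm : (0 : ℝ) < m := by exact_mod_cast (by omega : 0 < m)
  have hn' : (2 : ℝ) ≤ n := by exact_mod_cast hn
  set t : ℝ := n * (n - 1) / (2 * m)
  have h_min : min ((n : ℝ) ^ 2 / (8 * m)) (1 / 8) ≤ min (t / 2) (1 / 2) := by
    refine min_le_min ?_ (by norm_num)
    rw [div_div, div_le_div_iff₀ (by positivity) (by positivity)]
    nlinarith [mul_nonneg (mul_nonneg hm.le (by linarith : (0 : ℝ) ≤ n))
      (by linarith : (0 : ℝ) ≤ n - 2)]
  have ht : 0 ≤ t := div_nonneg (mul_nonneg (by linarith) (by linarith)) (by positivity)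
  calc (m.descFactorial n : ℝ) ≤ (m : ℝ) ^ n * Real.exp (-t) := descFactorial_le_pow_mul_exp hnm
    _ ≤ (m : ℝ) ^ n * (1 - min (t / 2) (1 / 2)) :=
        mul_le_mul_of_nonneg_left (exp_neg_le_one_sub_min_half ht) (by positivity)
    _ ≤ _ := by rw [mul_comm]; gcongr

lemma card_not_injective {α β : Type*} [Fintype α] [Fintype β] :
    Nat.card {f : α → β // ¬Injective f} =
      Fintype.card β ^ Fintype.card α - (Fintype.card β).descFactorial (Fintype.card α) := by
  classical
  rw [Nat.card_eq_fintype_card, Fintype.card_subtype_compl, Fintype.card_fun,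
    Fintype.card_congr (subtypeInjectiveEquivEmbedding α β), Fintype.card_embedding_eq]

lemma min_le_card_not_injective_div {α β : Type*} [Fintype α] [Fintype β]
    (hα : 2 ≤ Fintype.card α) (hαβ : Fintype.card α ≤ Fintype.card β) :
    min ((Fintype.card α : ℝ) ^ 2 / (8 * Fintype.card β)) (1 / 8) ≤
      Nat.card {f : α → β // ¬Injective f} / (Fintype.card β : ℝ) ^ Fintype.card α := by
  have hβ : (0 : ℝ) < Fintype.card β := by exact_mod_cast (by omega : 0 < Fintype.card β)
  rw [card_not_injective, Nat.cast_sub (Nat.descFactorial_le_pow _ _), le_div_iff₀ (by positivity)]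
  push_cast
  linarith [Nat.descFactorial_le_one_sub_min_mul_pow hα hαβ]

section Renaming

variable {M : Type*} [Fintype M] [DecidableEq M]

def permEquivProdFixing (x₀ : M) : Perm M ≃ M × {σ : Perm M // σ x₀ = x₀} where
  toFun σ := ⟨σ x₀, ⟨σ.trans (swap x₀ (σ x₀)), by simp⟩⟩
  invFun p := p.2.1.trans (swap x₀ p.1)
  left_inv σ := by ext y; simp [swap_apply_self]
  right_inv := by
    rintro ⟨y, σ, hσ⟩
    refine Prod.ext (by simp [hσ]) (Subtype.ext ?_)
    ext z
    simp [hσ, swap_apply_self]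

lemma card_subtype_apply_perm_div {ι : Type*} [Fintype ι] (x₀ : M) (P : (ι → M) → Prop) :
    (Nat.card {π : ι → Perm M // P fun i => π i x₀} : ℝ) /
        (Fintype.card M).factorial ^ Fintype.card ι =
      Nat.card {f : ι → M // P f} / (Fintype.card M : ℝ) ^ Fintype.card ι := by
  classical
  set K := Fintype.card {σ : Perm M // σ x₀ = x₀}
  have hK : 0 < K := Fintype.card_pos_iff.mpr ⟨⟨1, rfl⟩⟩
  have h_fact : (Fintype.card M).factorial = Fintype.card M * K := by
    rw [← Fintype.card_perm, Fintype.card_congr (permEquivProdFixing x₀), Fintype.card_prod]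
  let e : (ι → Perm M) ≃ (ι → M) × (ι → {σ : Perm M // σ x₀ = x₀}) :=
    (piCongrRight fun _ => permEquivProdFixing x₀).trans (arrowProdEquivProdArrow _ _ _)
  have h_card : Nat.card {π : ι → Perm M // P fun i => π i x₀} =
      Nat.card {f : ι → M // P f} * K ^ Fintype.card ι := by
    rw [Nat.card_congr ((e.subtypeEquiv (p := fun π => P fun i => π i x₀) fun _ => Iff.rfl).trans
      prodSubtypeFstEquivSubtypeProd), Nat.card_prod, Nat.card_eq_fintype_card (α := ι → _),
      Fintype.card_fun]
  rw [h_card, h_fact]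
  push_cast
  rw [mul_pow, mul_div_mul_right _ _ (by positivity)]

end Renaming

section EnvyFree

variable {M : Type*} [DecidableEq M]

def singleItemValuation (x₀ : M) (S : Finset M) : ℝ := if x₀ ∈ S then 1 else 0

lemma singleItemValuation_nonneg (x₀ : M) (S : Finset M) : 0 ≤ singleItemValuation x₀ S := by
  unfold singleItemValuation; split_ifs <;> norm_num

lemma singleItemValuation_image_symm (x₀ : M) (σ : Perm M) (A : Finset M) :
    singleItemValuation x₀ (A.image σ.symm) = if σ x₀ ∈ A then 1 else 0 := by
  simp [singleItemValuation, symm_apply_eq]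

lemma injective_apply_of_envyFree [Fintype M] {n : ℕ} (x₀ : M) (π : Fin n → Perm M)
    (A : Fin n → Finset M) (hA : IsAllocation A univ)
    (hEF : ∀ i j, singleItemValuation x₀ ((A i).image (π i).symm) ≥
      singleItemValuation x₀ ((A j).image (π i).symm)) :
    Injective fun i => π i x₀ := by
  have h_mem : ∀ i, π i x₀ ∈ A i := by
    intro i
    obtain ⟨j, -, hj⟩ := mem_biUnion.mp (hA.2 ▸ mem_univ (π i x₀))
    have := hEF i j
    simp only [singleItemValuation_image_symm, if_pos hj] at this
    by_contra h
    norm_num [h] at this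
  intro i j (hij : π i x₀ = π j x₀)
  by_contra hne
  exact disjoint_left.mp (hA.1 i j hne) (h_mem i) (show π i x₀ ∈ A j from hij ▸ h_mem j)

end EnvyFree

/-- For `n ≥ 2` agents and `m ≥ 2n` items, there exists a (non-negative) valuation
`v : 2^M → ℝ≥0` such that, when each agent `i` receives the renamed valuation
`v^{π_i}(T) = v(π_i⁻¹(T))` for independent uniformly random permutations `π₁, …, πₙ`, the
probability that no envy-free allocation exists is at least `min(n²/(8m), 1/8)`.  Probability is
expressed by counting permutation profiles out of `(m!)ⁿ`. -/
theorem no_ef_whp_unit_demand {M : Type*} [Fintype M] [DecidableEq M] (n m : ℕ)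
    (hn : 2 ≤ n) (hm : 2 * n ≤ m) (hM : Fintype.card M = m) :
    ∃ v : Finset M → ℝ, (∀ S : Finset M, 0 ≤ v S) ∧
      min ((n : ℝ) ^ 2 / (8 * m)) (1 / 8) * (Nat.factorial m : ℝ) ^ n ≤
        Nat.card {π : Fin n → Equiv.Perm M //
          ¬ ∃ A : Fin n → Finset M, IsAllocation A Finset.univ ∧
            ∀ i j : Fin n,
              v ((A i).image (⇑(π i).symm)) ≥ v ((A j).image (⇑(π i).symm))} := by
  obtain ⟨x₀⟩ : Nonempty M := Fintype.card_pos_iff.mp (by omega)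
  refine ⟨singleItemValuation x₀, singleItemValuation_nonneg x₀, ?_⟩
  have h_uniform := card_subtype_apply_perm_div x₀ fun f : Fin n → M => ¬Injective f
  have h_birthday := min_le_card_not_injective_div (α := Fin n) (β := M)
  simp only [Fintype.card_fin, hM] at h_uniform h_birthday
  have h_fact : (0 : ℝ) < (m.factorial : ℝ) ^ n := by positivity
  calc min ((n : ℝ) ^ 2 / (8 * m)) (1 / 8) * (m.factorial : ℝ) ^ n
      ≤ Nat.card {f : Fin n → M // ¬Injective f} / (m : ℝ) ^ n * (m.factorial : ℝ) ^ n := by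
        gcongr; exact h_birthday hn (by omega)
    _ = Nat.card {π : Fin n → Perm M // ¬Injective fun i => π i x₀} := by
        rw [← h_uniform, div_mul_cancel₀ _ h_fact.ne']
    _ ≤ _ := by
        norm_cast
        refine Nat.card_le_card_of_injective (Subtype.map id ?_)
          (Subtype.map_injective _ injective_id)
        rintro π h ⟨A, hA, hEF⟩
        exact h (injective_apply_of_envyFree x₀ π A hA hEF)
end
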